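/- arXiv:2209.13937 — 11 statements merged into one kernel-verified Lean document; each statement's English description precedes it below -/
import Mathlib

section
/- Let n ≥ 2 be an integer and v = ⌊√n⌋. (i) If (a,b) and (x,y) are pairs of positive integers with a, b, x, y ≤ v, gcd(a,b) = 1, gcd(x,y) = 1, and n divides ax + by, then ax + by = n. (ii) If (a,b) is a pair of positive integers with a, b ≤ v, gcd(a,b) = 1, and n divides a² + ab + b², then a² + ab + b² = n. (In particular, every divisibility condition n ∣ ax+by or n ∣ a²+ab+b² among the denominators of Farey fractions of order ⌊√n⌋ lifts to an equality, so every non-translation side-pairing element of the convex hull of the Farey sequence of order ⌊√n⌋ for Γ₀(n) has lower-left entry exactly n.) -/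
/-!
Every product of two integers at most `v = ⌊√n⌋` is at most `v² ≤ n`, so `ax + by` is a
multiple of `n` in `(0, 2n]` and `a² + ab + b²` one in `(0, 3n]`. The value `2n` is excluded
for `a² + ab + b²` by parity, and a sum of the largest possible size `2n` resp. `3n` forces every
factor to equal `v` and `n = v²`; then coprimality gives `v = 1`, i.e. `n = 1`.
-/

namespace Nat

lemma mul_le_of_le_sqrt {n a x : ℕ} (ha : a ≤ sqrt n) (hx : x ≤ sqrt n) : a * x ≤ n :=
  (Nat.mul_le_mul ha hx).trans (sqrt_le n)

lemma eq_sqrt_of_le_sqrt_of_mul_eq {n a x : ℕ} (ha : a ≤ sqrt n) (hx : x ≤ sqrt n)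
    (h : a * x = n) : a = sqrt n ∧ x = sqrt n := by
  have hsq := sqrt_le n
  have hax : a * x ≤ a * sqrt n := Nat.mul_le_mul_left a hx
  have hxv : a * sqrt n ≤ sqrt n * sqrt n := Nat.mul_le_mul_right _ ha
  constructor <;> nlinarith

lemma eq_one_of_coprime_of_le_sqrt_of_mul_eq {n a b x y : ℕ} (hab : Coprime a b)
    (ha : a ≤ sqrt n) (hb : b ≤ sqrt n) (hx : x ≤ sqrt n) (hy : y ≤ sqrt n)
    (hax : a * x = n) (hby : b * y = n) : n = 1 := by
  obtain ⟨rfl, rfl⟩ := eq_sqrt_of_le_sqrt_of_mul_eq ha hx hax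
  obtain ⟨rfl, -⟩ := eq_sqrt_of_le_sqrt_of_mul_eq hb hy hby
  rw [coprime_self] at hab
  rw [← hax, hab]

lemma Coprime.odd_sq_add_mul_add_sq {a b : ℕ} (hab : Coprime a b) :
    Odd (a ^ 2 + a * b + b ^ 2) := by
  have hnot_even : ¬(Even a ∧ Even b) := fun ⟨ha, hb⟩ =>
    absurd (dvd_one.mp (hab.gcd_eq_one ▸ Nat.dvd_gcd ha.two_dvd hb.two_dvd)) (by decide)
  simp only [← not_even_iff_odd, even_add, even_mul, even_pow] at hnot_even ⊢
  tauto

lemma mul_add_mul_eq_of_dvd_of_le_sqrt {n a b x y : ℕ} (hn : n ≠ 1) (ha : 0 < a) (hx : 0 < x)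
    (hav : a ≤ sqrt n) (hbv : b ≤ sqrt n) (hxv : x ≤ sqrt n) (hyv : y ≤ sqrt n)
    (hab : Coprime a b) (hdvd : n ∣ a * x + b * y) : a * x + b * y = n := by
  obtain ⟨k, hk⟩ := hdvd
  have hax := mul_le_of_le_sqrt hav hxv
  have hby := mul_le_of_le_sqrt hbv hyv
  have hpos : 0 < a * x := Nat.mul_pos ha hx
  have hk3 : k < 3 := by nlinarith
  interval_cases k
  · omega
  · omega
  · exact absurd (eq_one_of_coprime_of_le_sqrt_of_mul_eq hab hav hbv hxv hyv
      (by omega) (by omega)) hn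

lemma sq_add_mul_add_sq_eq_of_dvd_of_le_sqrt {n a b : ℕ} (hn : n ≠ 1) (ha : 0 < a)
    (hav : a ≤ sqrt n) (hbv : b ≤ sqrt n) (hab : Coprime a b)
    (hdvd : n ∣ a ^ 2 + a * b + b ^ 2) : a ^ 2 + a * b + b ^ 2 = n := by
  obtain ⟨k, hk⟩ := hdvd
  have haa := mul_le_of_le_sqrt hav hav
  have hab_le := mul_le_of_le_sqrt hav hbv
  have hbb := mul_le_of_le_sqrt hbv hbv
  have hpos : 0 < a * a := Nat.mul_pos ha ha
  rw [sq, sq] at hk ⊢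
  have hk4 : k < 4 := by nlinarith
  interval_cases k
  · omega
  · omega
  · have hodd := hab.odd_sq_add_mul_add_sq
    rw [sq, sq, hk] at hodd
    exact (not_even_iff_odd.mpr hodd ⟨n, by ring⟩).elim
  · exact absurd (eq_one_of_coprime_of_le_sqrt_of_mul_eq hab hav hbv hav hbv
      (by omega) (by omega)) hn

end Nat

/-- **Lemma.** Let `n ≥ 2` and `v = ⌊√n⌋`.
(i) If `a, b, x, y` are positive integers `≤ v` with `gcd(a,b) = gcd(x,y) = 1` and
`n ∣ ax + by`, then `ax + by = n`.
(ii) If `a, b` are positive integers `≤ v` with `gcd(a,b) = 1` and `n ∣ a² + ab + b²`,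
then `a² + ab + b² = n`.
(In other words, the divisibility conditions among denominators of the Farey sequence of
order `⌊√n⌋` lift to equalities: every non-translation side-pairing element of the convex hull
of the Farey sequence of order `⌊√n⌋` for `Γ₀(n)` has lower-left entry exactly `n`.) -/
theorem stmt4 (n : ℕ) (hn : 2 ≤ n) :
    (∀ a b x y : ℕ, 0 < a → 0 < b → 0 < x → 0 < y →
      a ≤ Nat.sqrt n → b ≤ Nat.sqrt n → x ≤ Nat.sqrt n → y ≤ Nat.sqrt n →
      Nat.Coprime a b → Nat.Coprime x y → n ∣ a * x + b * y → a * x + b * y = n) ∧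
    (∀ a b : ℕ, 0 < a → 0 < b → a ≤ Nat.sqrt n → b ≤ Nat.sqrt n →
      Nat.Coprime a b → n ∣ a ^ 2 + a * b + b ^ 2 → a ^ 2 + a * b + b ^ 2 = n) :=
  ⟨fun _ _ _ _ ha _ hx _ hav hbv hxv hyv hab _ =>
      Nat.mul_add_mul_eq_of_dvd_of_le_sqrt (by omega) ha hx hav hbv hxv hyv hab,
    fun _ _ ha _ hav hbv hab =>
      Nat.sq_add_mul_add_sq_eq_of_dvd_of_le_sqrt (by omega) ha hav hbv hab⟩
end

section
/- For every integer n ≥ 4, v₃(n) ≤ √n. Explicitly: if n ≥ 4 is an integer such that 9 does not divide n and no prime divisor of n is congruent to 2 modulo 3, and k is the number of distinct prime divisors of n congruent to 1 modulo 3, then 2^k ≤ √n (in all other cases v₃(n) = 0 and the inequality is trivial). -/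
/-! Each prime `p ≡ 1 (mod 3)` dividing `n` is at least `4 = 2 ^ 2`, and distinct primes
divide `n` jointly, so `v₃(n) ^ 2 ≤ n` for every `n`. -/

/-- `v₃(n)`, the number of order-three cone points of `ℍ²/Γ₀(n)`: it is `0` if `9 ∣ n` or if
some prime divisor of `n` is `≡ 2 (mod 3)`, and `2 ^ k` otherwise, where `k` is the number of
distinct prime divisors of `n` that are `≡ 1 (mod 3)`. -/
def v3 (n : ℕ) : ℕ :=
  if 9 ∣ n ∨ ∃ p ∈ n.primeFactors, p % 3 = 2 then 0
  else 2 ^ (n.primeFactors.filter fun p => p % 3 = 1).card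

theorem Nat.pow_card_le_of_subset_primeFactors {n a : ℕ} {S : Finset ℕ} (hn : n ≠ 0)
    (hS : S ⊆ n.primeFactors) (ha : ∀ p ∈ S, a ≤ p) : a ^ S.card ≤ n :=
  calc a ^ S.card ≤ ∏ p ∈ S, p := S.pow_card_le_prod id a ha
    _ ≤ ∏ p ∈ n.primeFactors, p := Nat.le_of_dvd (Finset.prod_pos fun _ hp =>
          (Nat.prime_of_mem_primeFactors hp).pos) (Finset.prod_dvd_prod_of_subset _ _ _ hS)
    _ ≤ n := Nat.le_of_dvd (Nat.pos_of_ne_zero hn) (Nat.prod_primeFactors_dvd n)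

theorem four_le_of_prime_of_mod_three_eq_one {p : ℕ} (hp : p.Prime) (h : p % 3 = 1) : 4 ≤ p := by
  have := hp.two_le
  omega

theorem v3_sq_le (n : ℕ) : v3 n ^ 2 ≤ n := by
  unfold v3
  split_ifs with h
  · simp
  · have hn : n ≠ 0 := by rintro rfl; simp at h
    rw [← pow_mul, mul_comm, pow_mul]
    exact Nat.pow_card_le_of_subset_primeFactors hn (Finset.filter_subset _ _) fun p hp =>
      four_le_of_prime_of_mod_three_eq_one (Nat.prime_of_mem_primeFactors (Finset.mem_filter.1 hp).1)
        (Finset.mem_filter.1 hp).2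

theorem stmt5_general (n : ℕ) : (v3 n : ℝ) ≤ Real.sqrt n :=
  Real.le_sqrt_of_sq_le (by exact_mod_cast v3_sq_le n)

/-- **Claim.** For every integer `n ≥ 4`, we have `v₃(n) ≤ √n`. -/
theorem stmt5 (n : ℕ) (hn : 4 ≤ n) : (v3 n : ℝ) ≤ Real.sqrt n :=
  stmt5_general n
end

section
/- Let p be a prime and let n be a positive power of p. Then ∑_{i=1}^{⌊√n⌋} φ(i) ≤ ⌊ n(1 + 1/p) / 3 ⌋, i.e. the totient summatory function evaluated at ⌊√n⌋ is at most ⌊(n + n/p)/3⌋. -/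
open Finset Nat

/-- number of x < d*k coprime to d -/
private lemma aux_card (d k : ℕ) :
    ((Finset.range (d * k)).filter d.Coprime).card = d.totient * k := by
  induction k with
  | zero => simp
  | succ k ih =>
    rw [Nat.mul_succ, Finset.range_eq_Ico,
      ← Finset.Ico_union_Ico_eq_Ico (Nat.zero_le (d * k)) (Nat.le_add_right (d * k) d),
      Finset.filter_union,
      Finset.card_union_of_disjoint
        (Finset.disjoint_filter_filter (Finset.Ico_disjoint_Ico_consecutive 0 (d * k) (d * k + d))),
      ← Finset.range_eq_Ico, ih, Nat.filter_coprime_Ico_eq_totient, Nat.mul_succ]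

private lemma tot_mul_le (d k : ℕ) : Nat.totient (d * k) ≤ d.totient * k := by
  rw [Nat.totient_eq_card_coprime, ← aux_card d k]
  refine Finset.card_le_card fun x hx => ?_
  simp only [Finset.mem_filter] at hx ⊢
  exact ⟨hx.1, Nat.Coprime.coprime_dvd_left (dvd_mul_right d k) hx.2⟩

private lemma tot_le_div {d : ℕ} (b : ℕ) (h : d ∣ b) :
    Nat.totient b ≤ d.totient * (b / d) := by
  obtain ⟨k, rfl⟩ := h
  rcases Nat.eq_zero_or_pos d with rfl | hd
  · simp
  · rw [Nat.mul_div_cancel_left _ hd]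
    exact tot_mul_le d k

private lemma pointwise (b : ℕ) :
    Nat.totient b + (if 2 ∣ b then b / 2 else 0) + (if 3 ∣ b then b / 3 else 0)
      + (if 5 ∣ b then b / 5 else 0) + (if 30 ∣ b then b / 30 else 0)
    ≤ b + (if 6 ∣ b then b / 6 else 0) + (if 10 ∣ b then b / 10 else 0)
      + (if 15 ∣ b then b / 15 else 0) := by
  have hb : Nat.totient b ≤ b := Nat.totient_le b
  by_cases c2 : 2 ∣ b <;> by_cases c3 : 3 ∣ b <;> by_cases c5 : 5 ∣ b
  · have c30 : 30 ∣ b := by omega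
    have h := tot_le_div (d := 30) b c30
    rw [show Nat.totient 30 = 8 from by decide] at h
    simp only [if_pos c2, if_pos c3, if_pos c5, if_pos c30,
      if_pos (show 6 ∣ b by omega), if_pos (show 10 ∣ b by omega),
      if_pos (show 15 ∣ b by omega)]
    omega
  · have c6 : 6 ∣ b := by omega
    have h := tot_le_div (d := 6) b c6
    rw [show Nat.totient 6 = 2 from by decide] at h
    simp only [if_pos c2, if_pos c3, if_neg c5, if_pos c6,
      if_neg (show ¬ 30 ∣ b by omega), if_neg (show ¬ 10 ∣ b by omega),
      if_neg (show ¬ 15 ∣ b by omega)]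
    omega
  · have c10 : 10 ∣ b := by omega
    have h := tot_le_div (d := 10) b c10
    rw [show Nat.totient 10 = 4 from by decide] at h
    simp only [if_pos c2, if_neg c3, if_pos c5, if_pos c10,
      if_neg (show ¬ 30 ∣ b by omega), if_neg (show ¬ 6 ∣ b by omega),
      if_neg (show ¬ 15 ∣ b by omega)]
    omega
  · have h := tot_le_div (d := 2) b c2
    rw [show Nat.totient 2 = 1 from by decide] at h
    simp only [if_pos c2, if_neg c3, if_neg c5,
      if_neg (show ¬ 30 ∣ b by omega), if_neg (show ¬ 6 ∣ b by omega),
      if_neg (show ¬ 10 ∣ b by omega), if_neg (show ¬ 15 ∣ b by omega)]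
    omega
  · have c15 : 15 ∣ b := by omega
    have h := tot_le_div (d := 15) b c15
    rw [show Nat.totient 15 = 8 from by decide] at h
    simp only [if_neg c2, if_pos c3, if_pos c5, if_pos c15,
      if_neg (show ¬ 30 ∣ b by omega), if_neg (show ¬ 6 ∣ b by omega),
      if_neg (show ¬ 10 ∣ b by omega)]
    omega
  · have h := tot_le_div (d := 3) b c3
    rw [show Nat.totient 3 = 2 from by decide] at h
    simp only [if_neg c2, if_pos c3, if_neg c5,
      if_neg (show ¬ 30 ∣ b by omega), if_neg (show ¬ 6 ∣ b by omega),
      if_neg (show ¬ 10 ∣ b by omega), if_neg (show ¬ 15 ∣ b by omega)]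
    omega
  · have h := tot_le_div (d := 5) b c5
    rw [show Nat.totient 5 = 4 from by decide] at h
    simp only [if_neg c2, if_neg c3, if_pos c5,
      if_neg (show ¬ 30 ∣ b by omega), if_neg (show ¬ 6 ∣ b by omega),
      if_neg (show ¬ 10 ∣ b by omega), if_neg (show ¬ 15 ∣ b by omega)]
    omega
  · simp only [if_neg c2, if_neg c3, if_neg c5,
      if_neg (show ¬ 30 ∣ b by omega), if_neg (show ¬ 6 ∣ b by omega),
      if_neg (show ¬ 10 ∣ b by omega), if_neg (show ¬ 15 ∣ b by omega)]
    omega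

private def S (d m : ℕ) : ℕ := ∑ b ∈ Finset.Icc 1 m, (if d ∣ b then b / d else 0)

private lemma key (m : ℕ) :
    (∑ i ∈ Finset.Icc 1 m, Nat.totient i) + S 2 m + S 3 m + S 5 m + S 30 m
      ≤ S 1 m + S 6 m + S 10 m + S 15 m := by
  have h1 : S 1 m = ∑ b ∈ Finset.Icc 1 m, b := by
    simp [S]
  rw [h1]
  simp only [S, ← Finset.sum_add_distrib]
  exact Finset.sum_le_sum fun b _ => pointwise b

private lemma Sval (d m : ℕ) (hd : 0 < d) : 2 * S d m = (m / d) * (m / d + 1) := by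
  have himg : (Finset.Icc 1 m).filter (fun b => d ∣ b)
      = (Finset.Icc 1 (m / d)).image (fun j => d * j) := by
    ext x
    simp only [Finset.mem_filter, Finset.mem_image, Finset.mem_Icc]
    constructor
    · rintro ⟨⟨hx1, hxm⟩, k, rfl⟩
      refine ⟨k, ⟨?_, ?_⟩, rfl⟩
      · rcases Nat.eq_zero_or_pos k with rfl | hk
        · omega
        · exact hk
      · rw [Nat.le_div_iff_mul_le hd]
        have hc : d * k = k * d := Nat.mul_comm d k
        omega
    · rintro ⟨j, ⟨hj1, hj2⟩, rfl⟩
      rw [Nat.le_div_iff_mul_le hd] at hj2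
      have hc : d * j = j * d := Nat.mul_comm d j
      exact ⟨⟨Nat.mul_pos hd hj1, by omega⟩, j, rfl⟩
  have : S d m = ∑ j ∈ Finset.Icc 1 (m / d), j := by
    rw [S, ← Finset.sum_filter, himg,
      Finset.sum_image (fun a _ b _ h => Nat.eq_of_mul_eq_mul_left hd h)]
    exact Finset.sum_congr rfl fun j _ => Nat.mul_div_cancel_left j hd
  rw [this]
  have gauss : ∀ k : ℕ, 2 * ∑ j ∈ Finset.Icc 1 k, j = k * (k + 1) := by
    intro k
    induction k with
    | zero => simp
    | succ k ih =>
      rw [Finset.sum_Icc_succ_top (by omega : 1 ≤ k + 1), Nat.mul_add, ih]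
      ring
  exact gauss (m / d)

set_option maxHeartbeats 1000000 in
private lemma quadB (m t2 t3 t5 t6 t10 t15 t30 : ℕ) (hm : 90 ≤ m)
    (h2a : 2*t2 ≤ m) (h2b : m < 2*t2+2) (h3a : 3*t3 ≤ m) (h3b : m < 3*t3+3)
    (h5a : 5*t5 ≤ m) (h5b : m < 5*t5+5) (h6a : 6*t6 ≤ m) (h6b : m < 6*t6+6)
    (h10a : 10*t10 ≤ m) (h10b : m < 10*t10+10) (h15a : 15*t15 ≤ m) (h15b : m < 15*t15+15)
    (h30a : 30*t30 ≤ m) (h30b : m < 30*t30+30) :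
    3*(m*(m+1) + t6*(t6+1) + t10*(t10+1) + t15*(t15+1))
      ≤ 2*(m*m) + 3*(t2*(t2+1) + t3*(t3+1) + t5*(t5+1) + t30*(t30+1)) := by
  nlinarith [sq_nonneg (m-2*t2), sq_nonneg (m-3*t3), sq_nonneg (m-5*t5), sq_nonneg (m-6*t6),
    sq_nonneg (m-10*t10), sq_nonneg (m-15*t15), sq_nonneg (m-30*t30), sq_nonneg m,
    mul_le_mul h2a h2a (Nat.zero_le _) (Nat.zero_le _),
    mul_le_mul h6a h6a (Nat.zero_le _) (Nat.zero_le _)]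

set_option maxHeartbeats 1000000 in
private lemma analytic (m : ℕ) (hm : 90 ≤ m) :
    (∑ i ∈ Finset.Icc 1 m, Nat.totient i) * 3 ≤ m * m := by
  have hk := key m
  have E1 := Sval 1 m (by norm_num)
  have E2 := Sval 2 m (by norm_num)
  have E3 := Sval 3 m (by norm_num)
  have E5 := Sval 5 m (by norm_num)
  have E6 := Sval 6 m (by norm_num)
  have E10 := Sval 10 m (by norm_num)
  have E15 := Sval 15 m (by norm_num)
  have E30 := Sval 30 m (by norm_num)
  rw [Nat.div_one] at E1
  have h2a : 2*(m/2) ≤ m := by omega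
  have h2b : m < 2*(m/2)+2 := by omega
  have h3a : 3*(m/3) ≤ m := by omega
  have h3b : m < 3*(m/3)+3 := by omega
  have h5a : 5*(m/5) ≤ m := by omega
  have h5b : m < 5*(m/5)+5 := by omega
  have h6a : 6*(m/6) ≤ m := by omega
  have h6b : m < 6*(m/6)+6 := by omega
  have h10a : 10*(m/10) ≤ m := by omega
  have h10b : m < 10*(m/10)+10 := by omega
  have h15a : 15*(m/15) ≤ m := by omega
  have h15b : m < 15*(m/15)+15 := by omega
  have h30a : 30*(m/30) ≤ m := by omega
  have h30b : m < 30*(m/30)+30 := by omega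
  have B := quadB m (m/2) (m/3) (m/5) (m/6) (m/10) (m/15) (m/30) hm
    h2a h2b h3a h3b h5a h5b h6a h6b h10a h10b h15a h15b h30a h30b
  linarith [hk, E1, E2, E3, E5, E6, E10, E15, E30, B]

set_option maxRecDepth 40000 in
private lemma decA : ∀ m < 90, 2 ≤ m →
    (∑ i ∈ Finset.Icc 1 m, Nat.totient i) * 3 ≤ m*m+m := by decide

set_option maxRecDepth 40000 in
private lemma decB : ∀ m < 90, 14 ≤ m →
    (∑ i ∈ Finset.Icc 1 m, Nat.totient i) * 3 ≤ m*m+1 := by decide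

set_option maxRecDepth 40000 in
private lemma decC : ∀ m < 14, ∀ q < 196,
    (2 ≤ q ∧ m*m ≤ q ∧ q < (m+1)*(m+1) ∧ (∀ k < q, k ∣ q → k = 1)) →
    (∑ i ∈ Finset.Icc 1 m, Nat.totient i) * 3 ≤ q + 1 := by decide

private lemma lemA (m : ℕ) (hm : 2 ≤ m) :
    (∑ i ∈ Finset.Icc 1 m, Nat.totient i) * 3 ≤ m*m+m := by
  rcases lt_or_ge m 90 with h | h
  · exact decA m h hm
  · exact le_trans (analytic m h) (Nat.le_add_right _ _)

private lemma lemB (m : ℕ) (hm : 14 ≤ m) :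
    (∑ i ∈ Finset.Icc 1 m, Nat.totient i) * 3 ≤ m*m+1 := by
  rcases lt_or_ge m 90 with h | h
  · exact decB m h hm
  · exact le_trans (analytic m h) (Nat.le_add_right _ _)

/-- **Lemma.** If `p` is a prime and `n` is a positive power of `p`, then
`∑_{i=1}^{⌊√n⌋} φ(i) ≤ ⌊n (1 + 1/p) / 3⌋`; note that `n (1 + 1/p) = n + n/p` is an integer,
so the right-hand side is `(n + n / p) / 3` with natural number division. -/
theorem stmt6 (p : ℕ) (hp : Nat.Prime p) (e : ℕ) (he : 1 ≤ e) (n : ℕ) (hn : n = p ^ e) :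
    ∑ i ∈ Finset.Icc 1 (Nat.sqrt n), Nat.totient i ≤ (n + n / p) / 3 := by
  subst hn
  have hp2 := hp.two_le
  have hdivp : p ^ e / p = p ^ (e-1) := by
    conv_lhs => rw [show e = (e-1)+1 from by omega]
    rw [pow_succ, Nat.mul_div_cancel _ hp.pos]
  rw [Nat.le_div_iff_mul_le (by norm_num : (0:ℕ) < 3), hdivp]
  rcases eq_or_lt_of_le he with he1 | he2
  · -- e = 1
    rw [show e = 1 from he1.symm]
    simp only [pow_one, Nat.sub_self, pow_zero]
    by_cases hcase : p < 196
    · have hmlt : Nat.sqrt p < 14 := by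
        rw [Nat.sqrt_lt]; omega
      exact decC (Nat.sqrt p) hmlt p hcase ⟨hp2, Nat.sqrt_le p, Nat.lt_succ_sqrt p,
        fun k hklt hkd =>
          (hp.eq_one_or_self_of_dvd k hkd).resolve_right (fun hkp => by omega)⟩
    · have h14 : 14 ≤ Nat.sqrt p := by
        rw [Nat.le_sqrt]; omega
      have hB := lemB (Nat.sqrt p) h14
      have hsq : Nat.sqrt p * Nat.sqrt p ≤ p := Nat.sqrt_le p
      linarith
  · -- e ≥ 2
    have he2' : 2 ≤ e := he2
    have hm2 : 2 ≤ Nat.sqrt (p^e) := by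
      rw [Nat.le_sqrt]
      calc 2*2 = 2^2 := by norm_num
        _ ≤ p^2 := Nat.pow_le_pow_left hp2 2
        _ ≤ p^e := Nat.pow_le_pow_right hp.one_lt.le he2'
    have hup : Nat.sqrt (p^e) ≤ p^(e-1) := by
      have h1 : p^e ≤ p^(e-1) * p^(e-1) := by
        rw [← pow_add]
        exact Nat.pow_le_pow_right hp.one_lt.le (by omega)
      calc Nat.sqrt (p^e) ≤ Nat.sqrt (p^(e-1) * p^(e-1)) := Nat.sqrt_le_sqrt h1
        _ = p^(e-1) := Nat.sqrt_eq _
    have hA := lemA (Nat.sqrt (p^e)) hm2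
    have hsq : Nat.sqrt (p^e) * Nat.sqrt (p^e) ≤ p^e := Nat.sqrt_le _
    linarith
end

section
/- For every integer m ≥ 2, ∑_{i=1}^{m} φ(i) ≤ 3m²/π² + 2m·ln(m). -/
open Finset ArithmeticFunction
open scoped ArithmeticFunction.Moebius

namespace Stmt8Aux

lemma phi_eq {n : ℕ} (hn : 0 < n) :
    (Nat.totient n : ℝ) = ∑ p ∈ n.divisorsAntidiagonal, (μ p.1 : ℝ) * p.2 := by
  have h := (ArithmeticFunction.sum_eq_iff_sum_mul_moebius_eq
    (R := ℝ) (f := fun i => (Nat.totient i : ℝ)) (g := fun i => (i : ℝ))).mp ?_ n hn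
  · exact h.symm
  · intro k hk
    exact_mod_cast congrArg (Nat.cast (R := ℝ)) (Nat.sum_totient k)

lemma swap_sum (m : ℕ) (F : ℕ → ℕ → ℝ) :
    ∑ i ∈ Icc 1 m, ∑ p ∈ Nat.divisorsAntidiagonal i, F p.1 p.2
      = ∑ d ∈ Icc 1 m, ∑ e ∈ Icc 1 (m / d), F d e := by
  rw [Finset.sum_sigma', Finset.sum_sigma']
  refine Finset.sum_nbij' (fun p => ⟨p.2.1, p.2.2⟩) (fun p => ⟨p.1 * p.2, (p.1, p.2)⟩)
    ?_ ?_ ?_ ?_ ?_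
  · rintro ⟨i, d, e⟩ hp
    simp only [Finset.mem_sigma, Finset.mem_Icc, Nat.mem_divisorsAntidiagonal] at hp ⊢
    obtain ⟨⟨hi1, hi2⟩, hde, hne⟩ := hp
    have hd : 1 ≤ d := Nat.pos_of_ne_zero (by rintro rfl; rw [zero_mul] at hde; omega)
    have he : 1 ≤ e := Nat.pos_of_ne_zero (by rintro rfl; rw [mul_zero] at hde; omega)
    refine ⟨⟨hd, ?_⟩, he, ?_⟩
    · calc d ≤ d * e := Nat.le_mul_of_pos_right d he
      _ = i := hde
      _ ≤ m := hi2
    · rw [Nat.le_div_iff_mul_le hd]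
      calc e * d = d * e := by ring
      _ = i := hde
      _ ≤ m := hi2
  · rintro ⟨d, e⟩ hp
    simp only [Finset.mem_sigma, Finset.mem_Icc] at hp
    obtain ⟨⟨hd1, hd2⟩, he1, he2⟩ := hp
    have hdem : d * e ≤ m := by
      rw [mul_comm]; exact (Nat.le_div_iff_mul_le (by omega : 0 < d)).mp he2
    have hne : d * e ≠ 0 := Nat.mul_ne_zero (by omega) (by omega)
    exact Finset.mem_sigma.mpr ⟨Finset.mem_Icc.mpr ⟨Nat.one_le_iff_ne_zero.mpr hne, hdem⟩,
      Nat.mem_divisorsAntidiagonal.mpr ⟨rfl, hne⟩⟩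
  · rintro ⟨i, d, e⟩ hp
    simp only [Finset.mem_sigma, Finset.mem_Icc, Nat.mem_divisorsAntidiagonal] at hp
    obtain ⟨_, hde, _⟩ := hp
    simp [hde]
  · rintro ⟨d, e⟩ _; rfl
  · rintro ⟨i, d, e⟩ _; rfl

lemma gauss (n : ℕ) : ∑ e ∈ Icc 1 n, (e : ℝ) = n * (n + 1) / 2 := by
  induction n with
  | zero => simp
  | succ n ih =>
    rw [Finset.sum_Icc_succ_top (by omega : 1 ≤ n + 1), ih]
    push_cast; ring

lemma moebius_summable : Summable (fun d : ℕ => (μ d : ℝ) / (d : ℝ) ^ 2) := by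
  apply Summable.of_norm_bounded (g := fun d : ℕ => ((d : ℝ) ^ 2)⁻¹)
  · exact (Real.summable_one_div_nat_pow.mpr one_lt_two).congr (by intro n; simp)
  · intro d
    rcases Nat.eq_zero_or_pos d with rfl | hd
    · simp
    · rw [Real.norm_eq_abs, abs_div, abs_of_nonneg (by positivity : (0:ℝ) ≤ (d:ℝ)^2)]
      rw [div_le_iff₀ (by positivity), inv_mul_cancel₀ (by positivity)]
      have := abs_moebius_le_one (n := d)
      calc |(μ d : ℝ)| = ((|μ d| : ℤ) : ℝ) := by push_cast; rfl
        _ ≤ 1 := by exact_mod_cast this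

lemma moebius_tsum : ∑' d : ℕ, (μ d : ℝ) / (d : ℝ) ^ 2 = 6 / Real.pi ^ 2 := by
  have h2 : (1 : ℝ) < (2 : ℂ).re := by norm_num
  have hz := ArithmeticFunction.LSeries_zeta_mul_Lseries_moebius (s := 2) h2
  rw [ArithmeticFunction.LSeries_zeta_eq_riemannZeta h2, riemannZeta_two] at hz
  have hpi : (Real.pi : ℂ) ^ 2 ≠ 0 := by
    simpa using Complex.ofReal_ne_zero.mpr Real.pi_ne_zero
  have hL : LSeries (fun n => (μ n : ℂ)) 2 = 6 / (Real.pi : ℂ) ^ 2 := by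
    field_simp at hz ⊢
    linear_combination hz
  have hterm : ∀ n : ℕ, LSeries.term (fun n => (μ n : ℂ)) 2 n
      = (((μ n : ℝ) / (n : ℝ) ^ 2 : ℝ) : ℂ) := by
    intro n
    rcases Nat.eq_zero_or_pos n with rfl | hn
    · simp [LSeries.term]
    · rw [LSeries.term_of_ne_zero (by omega)]
      have : (n : ℂ) ^ (2 : ℂ) = ((n : ℝ) : ℂ) ^ (2 : ℕ) := by
        rw [show (2 : ℂ) = ((2 : ℕ) : ℂ) by norm_num, Complex.cpow_natCast]
        norm_num
      rw [this]
      push_cast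
      ring
  have heq : LSeries (fun n => (μ n : ℂ)) 2 = ((∑' d : ℕ, (μ d : ℝ) / (d : ℝ) ^ 2 : ℝ) : ℂ) := by
    rw [LSeries, Complex.ofReal_tsum]
    exact tsum_congr hterm
  rw [heq] at hL
  exact_mod_cast hL

lemma moebius_partial (m : ℕ) (hm : 1 ≤ m) :
    ∑ d ∈ Icc 1 m, (μ d : ℝ) / (d : ℝ) ^ 2 ≤ 6 / Real.pi ^ 2 + 1 / m := by
  set f : ℕ → ℝ := fun d => (μ d : ℝ) / (d : ℝ) ^ 2 with hf
  have hsum := moebius_summable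
  have hrange : ∑ d ∈ Icc 1 m, f d = ∑ d ∈ Finset.range (m + 1), f d := by
    apply Finset.sum_subset
    · intro x hx; simp only [Finset.mem_Icc] at hx; simp only [Finset.mem_range]; omega
    · intro x hx hx'
      have hx0 : x = 0 := by
        simp only [Finset.mem_range] at hx
        simp only [Finset.mem_Icc] at hx'
        omega
      simp [hx0, hf]
  set K : Set ℕ := (Finset.range (m+1) : Set ℕ) with hK
  have key := Summable.sum_add_tsum_compl (s := Finset.range (m + 1)) hsum
  have habs : ∀ d : ℕ, m < d → |f d| ≤ ((d : ℝ) ^ 2)⁻¹ := by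
    intro d hd
    have hd0 : (0:ℝ) < (d:ℝ)^2 := by
      have : 0 < d := by omega
      positivity
    rw [hf]
    simp only
    rw [abs_div, abs_of_pos hd0, div_le_iff₀ hd0, inv_mul_cancel₀ hd0.ne']
    have h1 := abs_moebius_le_one (n := d)
    calc |(μ d : ℝ)| = ((|μ d| : ℤ) : ℝ) := by push_cast; rfl
      _ ≤ 1 := by exact_mod_cast h1
  have htail_abs : ∑' x : ↥Kᶜ, |f x| ≤ 1 / (m : ℝ) := by
    have hsub : Summable (fun x : ↥Kᶜ => |f x|) := by
      have := (hsum.subtype (Kᶜ)).abs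
      exact this
    refine Summable.tsum_le_of_sum_le hsub ?_
    intro t
    classical
    set t' : Finset ℕ := t.image Subtype.val with ht'
    have hsum_eq : ∑ x ∈ t, |f x| = ∑ x ∈ t', |f x| := by
      rw [ht', Finset.sum_image (fun a _ b _ hab => Subtype.ext hab)]
    rw [hsum_eq]
    rcases t'.eq_empty_or_nonempty with h | h
    · rw [h]; simp
    · set N := t'.max' h with hN
      have hmem : ∀ x ∈ t', m < x ∧ x ≤ N := by
        intro x hx
        constructor
        · rw [ht'] at hx
          obtain ⟨a, _, rfl⟩ := Finset.mem_image.mp hx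
          have ha := a.2
          simp only [hK, Set.mem_compl_iff, Finset.coe_range, Set.mem_Iio] at ha
          omega
        · exact Finset.le_max' _ _ hx
      have hsubset : t' ⊆ Finset.Ioc m N := by
        intro x hx
        rw [Finset.mem_Ioc]
        exact hmem x hx
      have hmN : m ≤ N := by
        obtain ⟨x, hx⟩ := h
        have := hmem x hx
        omega
      calc ∑ x ∈ t', |f x| ≤ ∑ x ∈ Finset.Ioc m N, |f x| :=
            Finset.sum_le_sum_of_subset_of_nonneg hsubset (fun _ _ _ => abs_nonneg _)
        _ ≤ ∑ x ∈ Finset.Ioc m N, ((x : ℝ) ^ 2)⁻¹ := by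
            refine Finset.sum_le_sum fun x hx => habs x ?_
            exact (Finset.mem_Ioc.mp hx).1
        _ ≤ (m : ℝ)⁻¹ - (N : ℝ)⁻¹ := sum_Ioc_inv_sq_le_sub (by omega) hmN
        _ ≤ 1 / (m : ℝ) := by
            rw [one_div]
            have : (0:ℝ) ≤ (N : ℝ)⁻¹ := by positivity
            linarith
  have htail : |∑' x : ↥Kᶜ, f x| ≤ 1 / (m : ℝ) := by
    refine le_trans ?_ htail_abs
    have := norm_tsum_le_tsum_norm
      (f := fun x : ↥Kᶜ => f x) ?_
    · simpa using this
    · exact (hsum.subtype (Kᶜ)).norm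
  rw [hrange]
  have := moebius_tsum
  rw [this] at key
  have habs' := (abs_le.mp htail).1
  linarith [key]

end Stmt8Aux

/-- **Bound on the totient summatory function.** For every integer `m ≥ 2`,
`∑_{i=1}^{m} φ(i) ≤ 3 m² / π² + 2 m ln m`. -/
theorem stmt8 (m : ℕ) (hm : 2 ≤ m) :
    (∑ i ∈ Finset.Icc 1 m, Nat.totient i : ℝ) ≤
      3 * (m : ℝ) ^ 2 / Real.pi ^ 2 + 2 * m * Real.log m := by
  have hm0 : (0:ℝ) < m := by positivity
  have hmR : (2:ℝ) ≤ m := by exact_mod_cast hm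
  have hpi : (0:ℝ) < Real.pi ^ 2 := by positivity
  -- Step 1: rewrite the sum using Möbius inversion and the hyperbola swap
  have step1 : (∑ i ∈ Finset.Icc 1 m, Nat.totient i : ℝ)
      = ∑ d ∈ Finset.Icc 1 m,
          (μ d : ℝ) * (((m / d : ℕ) : ℝ) * (((m / d : ℕ) : ℝ) + 1) / 2) := by
    rw [Finset.sum_congr rfl (fun i hi =>
      Stmt8Aux.phi_eq (by simp only [Finset.mem_Icc] at hi; omega))]
    rw [Stmt8Aux.swap_sum m (fun d e => (μ d : ℝ) * e)]
    refine Finset.sum_congr rfl fun d hd => ?_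
    rw [← Finset.mul_sum, Stmt8Aux.gauss]
  -- Step 2: per-term bound
  have hterm : ∀ d ∈ Finset.Icc 1 m,
      (μ d : ℝ) * (((m / d : ℕ) : ℝ) * (((m / d : ℕ) : ℝ) + 1) / 2)
        ≤ (m : ℝ) ^ 2 / 2 * ((μ d : ℝ) / (d : ℝ) ^ 2) + (m : ℝ) / 2 * ((d : ℝ))⁻¹ := by
    intro d hd
    simp only [Finset.mem_Icc] at hd
    have hd0 : (0:ℝ) < d := by exact_mod_cast (by omega : 0 < d)
    set T : ℝ := ((m / d : ℕ) : ℝ) with hT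
    set x : ℝ := (m : ℝ) / d with hx
    have hT0 : 0 ≤ T := by positivity
    have hx0 : 0 ≤ x := by positivity
    have hTx : T ≤ x := Nat.cast_div_le
    have hxT : x < T + 1 := by
      rw [hx, div_lt_iff₀ hd0]
      have h1 : m < d * (m / d) + d := by
        have h2 := Nat.div_add_mod m d
        have h3 := Nat.mod_lt m (show 0 < d by omega)
        omega
      calc (m:ℝ) < (d : ℝ) * T + d := by rw [hT]; exact_mod_cast h1
        _ = (T + 1) * d := by ring
    have hmu : |(μ d : ℝ)| ≤ 1 := by
      have h1 := abs_moebius_le_one (n := d)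
      calc |(μ d : ℝ)| = ((|μ d| : ℤ) : ℝ) := by push_cast; rfl
        _ ≤ 1 := by exact_mod_cast h1
    have habs : |T * (T + 1) - x ^ 2| ≤ x := by
      rw [abs_le]
      constructor <;> nlinarith [hT0, hTx, hxT, hx0]
    have hmain : (μ d : ℝ) * (x ^ 2 / 2) = (m : ℝ) ^ 2 / 2 * ((μ d : ℝ) / (d : ℝ) ^ 2) := by
      rw [hx]; field_simp
    have herr : (μ d : ℝ) * ((T * (T + 1) - x ^ 2) / 2) ≤ x / 2 := by
      calc (μ d : ℝ) * ((T * (T + 1) - x ^ 2) / 2)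
          ≤ |(μ d : ℝ) * ((T * (T + 1) - x ^ 2) / 2)| := le_abs_self _
        _ = |(μ d : ℝ)| * (|T * (T + 1) - x ^ 2| / 2) := by
            rw [abs_mul, abs_div]; norm_num
        _ ≤ 1 * (x / 2) := by
            apply mul_le_mul hmu _ (by positivity) (by norm_num)
            linarith
        _ = x / 2 := by ring
    have hxm : x / 2 = (m : ℝ) / 2 * ((d : ℝ))⁻¹ := by rw [hx]; ring
    calc (μ d : ℝ) * (T * (T + 1) / 2)
        = (μ d : ℝ) * (x ^ 2 / 2) + (μ d : ℝ) * ((T * (T + 1) - x ^ 2) / 2) := by ring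
      _ ≤ (m : ℝ) ^ 2 / 2 * ((μ d : ℝ) / (d : ℝ) ^ 2) + x / 2 := by
          rw [hmain]; linarith [herr]
      _ = (m : ℝ) ^ 2 / 2 * ((μ d : ℝ) / (d : ℝ) ^ 2) + (m : ℝ) / 2 * ((d : ℝ))⁻¹ := by
          rw [hxm]
  -- Step 3: sum the bounds
  have hP := Stmt8Aux.moebius_partial m (by omega)
  have hH : ∑ d ∈ Finset.Icc 1 m, ((d : ℝ))⁻¹ ≤ 1 + Real.log m := by
    have h1 := harmonic_le_one_add_log m
    have h2 : ((harmonic m : ℚ) : ℝ) = ∑ d ∈ Finset.Icc 1 m, ((d : ℝ))⁻¹ := by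
      rw [harmonic_eq_sum_Icc]; push_cast; rfl
    rw [h2] at h1
    exact h1
  have hlog2 : (2:ℝ)/3 ≤ Real.log m := by
    have h2m : Real.log 2 ≤ Real.log m := Real.log_le_log (by norm_num) hmR
    have := Real.log_two_gt_d9
    linarith
  calc (∑ i ∈ Finset.Icc 1 m, Nat.totient i : ℝ)
      = ∑ d ∈ Finset.Icc 1 m,
          (μ d : ℝ) * (((m / d : ℕ) : ℝ) * (((m / d : ℕ) : ℝ) + 1) / 2) := step1
    _ ≤ ∑ d ∈ Finset.Icc 1 m,
          ((m : ℝ) ^ 2 / 2 * ((μ d : ℝ) / (d : ℝ) ^ 2) + (m : ℝ) / 2 * ((d : ℝ))⁻¹) :=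
        Finset.sum_le_sum hterm
    _ = (m : ℝ) ^ 2 / 2 * (∑ d ∈ Finset.Icc 1 m, (μ d : ℝ) / (d : ℝ) ^ 2)
          + (m : ℝ) / 2 * (∑ d ∈ Finset.Icc 1 m, ((d : ℝ))⁻¹) := by
        rw [Finset.sum_add_distrib, Finset.mul_sum, Finset.mul_sum]
    _ ≤ (m : ℝ) ^ 2 / 2 * (6 / Real.pi ^ 2 + 1 / m)
          + (m : ℝ) / 2 * (1 + Real.log m) := by
        have h1 : (0:ℝ) ≤ (m : ℝ) ^ 2 / 2 := by positivity
        have h2 : (0:ℝ) ≤ (m : ℝ) / 2 := by positivity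
        exact add_le_add (mul_le_mul_of_nonneg_left hP h1)
          (mul_le_mul_of_nonneg_left hH h2)
    _ = 3 * (m : ℝ) ^ 2 / Real.pi ^ 2 + (m : ℝ) + (m : ℝ) / 2 * Real.log m := by
        field_simp
        ring
    _ ≤ 3 * (m : ℝ) ^ 2 / Real.pi ^ 2 + 2 * m * Real.log m := by
        nlinarith [mul_nonneg hm0.le (show (0:ℝ) ≤ 3/2 * Real.log m - 1 by linarith)]
end

section
/- Let n be a positive integer and let {(a_i, b_i) : i = 0, 1, 2} be an n-Farey triple. Then: (i) a_i + b_i = b_{i+1} + a_{i+2} for each i (indices mod 3); (ii) min_i (a_i + b_i) < √(4n/3); and (iii) if moreover min_i (a_i + b_i) > √n, then max(a_i, b_i) < √n for all i, each (a_i,b_i) is a side of dF_v with v = ⌊√n⌋, and each (a_i,b_i) is a free side. -/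
/-- An `n`-Farey triple: three pairwise distinct pairs `(aᵢ, bᵢ)` of coprime positive
integers with `a_{i+1} (aᵢ + bᵢ) + b_{i+1} bᵢ = n` for each `i` (indices mod 3). -/
def IsFareyTriple (n : ℕ) (P : Fin 3 → ℕ × ℕ) : Prop :=
  (∀ i, 0 < (P i).1 ∧ 0 < (P i).2 ∧ Nat.Coprime (P i).1 (P i).2) ∧
  Function.Injective P ∧
  ∀ i : Fin 3, (P (i + 1)).1 * ((P i).1 + (P i).2) + (P (i + 1)).2 * (P i).2 = n

/-- `(a, b)` is a side of `dF_v`: `a, b` are coprime positive integers with `a, b ≤ v` and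
`a + b > v` (i.e. `a, b` are the denominators of two consecutive fractions in the Farey
sequence of order `v`). -/
def IsSide (v a b : ℕ) : Prop :=
  0 < a ∧ 0 < b ∧ Nat.Coprime a b ∧ a ≤ v ∧ b ≤ v ∧ v < a + b

/-- `(a, b)` is a free side of `dF_{⌊√n⌋}` with respect to `Γ₀(n)`: it is a side, `n` does not
divide `a² + ab + b²`, and `n` does not divide `ax + by` for any side `(x, y)`. -/
def IsFreeSide (n a b : ℕ) : Prop :=
  IsSide (Nat.sqrt n) a b ∧ ¬ n ∣ a ^ 2 + a * b + b ^ 2 ∧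
    ∀ x y : ℕ, IsSide (Nat.sqrt n) x y → ¬ n ∣ a * x + b * y

/-! Subtracting the relations for `i` and `i + 1` shows that `a_{i+1} + b_{i+1}` divides
`b_{i+1} (a_i + b_{i+2})`, hence, by coprimality, `a_{i+1} + b_{i+1} ≤ b_{i+2} + a_i`; the three
inequalities sum to an equality, which is (i).

For `i` minimising `c = a_i + b_i`, (i) gives `a_i ≤ a_{i+1}` and `c ≤ a_{i+1} + b_{i+1}`, and
then `4n = 4a_{i+1}c + 4b_{i+1}b_i ≥ 3c² + (c - 2a_{i+1})²`, with equality only if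
`(a_i, b_i) = (a_{i+1}, b_{i+1})`.

If every `(a_j + b_j)² > n`, the two relations in which `(a_i, b_i)` occurs give
`a_i < a_{i+2} + b_{i+2}` and `b_i < a_{i+1} + b_{i+1}`, so `a_i², b_i² < n`. Any solution of
`a_i x + b_i y = n` other than `(a_{i+2} + b_{i+2}, b_{i+2})` has `x ≥ a_{i+2} + b_{i+2} + b_i` or
`y ≥ b_{i+2} + a_i = a_{i+1} + b_{i+1}`, which rules out every side `(x, y)` and also
`(x, y) = (a_i + b_i, b_i)`. Since `a_i x + b_i y < 2n` for sides, and `a_i² + a_i b_i + b_i²` is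
odd and below `3n`, divisibility by `n` would mean equality with `n`. -/

theorem add_le_of_mul_add_mul_eq {a₀ b₀ a₁ b₁ a₂ b₂ : ℕ} (hcop : Nat.Coprime a₁ b₁)
    (h : a₁ * (a₀ + b₀) + b₁ * b₀ = a₂ * (a₁ + b₁) + b₂ * b₁) (hpos : 0 < a₀ + b₂) :
    a₁ + b₁ ≤ b₂ + a₀ := by
  have key : (a₁ + b₁) * (a₀ + b₀) = b₁ * (a₀ + b₂) + (a₁ + b₁) * a₂ := by
    linear_combination h
  have hdvd : a₁ + b₁ ∣ b₁ * (a₀ + b₂) :=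
    (Nat.dvd_add_left (dvd_mul_right _ a₂)).mp (key ▸ dvd_mul_right _ _)
  rw [add_comm b₂]
  exact Nat.le_of_dvd hpos ((Nat.coprime_add_self_left.mpr hcop).dvd_of_dvd_mul_left hdvd)

theorem three_mul_sq_lt_four_mul {n a b a' b' : ℕ} (hb' : 0 < b') (hne : (a', b') ≠ (a, b))
    (hc : a' + b' ≤ a + b) (ha : a' ≤ a) (hn : a * (a' + b') + b * b' = n) :
    3 * (a' + b') ^ 2 < 4 * n := by
  by_contra! hle
  rcases le_or_gt (a' + b') a with hca | hac
  · nlinarith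
  · obtain ⟨d, hd⟩ : ∃ d, a' + b' = a + d := ⟨a' + b' - a, by omega⟩
    have hbb' : d * d ≤ b * b' := Nat.mul_le_mul (by omega) (by omega)
    -- `4n ≥ 4a(a + d) + 4d² = 3(a + d)² + (a - d)²`, so equality holds throughout
    have hda : d = a := by nlinarith
    have hb : b = d := by nlinarith
    have hb'd : b' = d := by nlinarith
    exact hne (by ext <;> simp <;> omega)

theorem eq_or_add_le_of_mul_add_mul_eq {a b X Y x y : ℕ} (hb : 0 < b) (hcop : Nat.Coprime a b)
    (h : a * x + b * y = a * X + b * Y) : (x = X ∧ y = Y) ∨ X + b ≤ x ∨ Y + a ≤ y := by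
  have hZ : (a : ℤ) * x + b * y = a * X + b * Y := by exact_mod_cast h
  obtain ⟨t, ht⟩ : (b : ℤ) ∣ x - X :=
    (Nat.Coprime.isCoprime hcop.symm).dvd_of_dvd_mul_left ⟨Y - y, by linear_combination hZ⟩
  have hy : (y : ℤ) = Y - a * t := by
    have hbZ : (b : ℤ) ≠ 0 := by exact_mod_cast hb.ne'
    exact mul_left_cancel₀ hbZ (by linear_combination hZ - a * ht)
  rcases lt_trichotomy t 0 with ht0 | rfl | ht0
  · right; right
    nlinarith
  · left; omega
  · right; left
    nlinarith

theorem odd_sq_add_mul_add_sq {a b : ℕ} (hcop : Nat.Coprime a b) :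
    Odd (a ^ 2 + a * b + b ^ 2) := by
  have : ¬ (Even a ∧ Even b) := fun ⟨ha, hb⟩ ↦
    by simpa [hcop] using Nat.dvd_gcd (even_iff_two_dvd.mp ha) (even_iff_two_dvd.mp hb)
  rw [← Nat.not_even_iff_odd]
  simp only [Nat.even_add, Nat.even_mul, Nat.even_pow]
  tauto

theorem eq_or_eq_two_mul_of_dvd {n m : ℕ} (h : n ∣ m) (h0 : 0 < m) (h3 : m < 3 * n) :
    m = n ∨ m = 2 * n := by
  obtain ⟨k, rfl⟩ := h
  have : k < 3 := by nlinarith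
  interval_cases k <;> simp_all [mul_comm]

theorem mul_lt_of_mul_self_lt_of_mul_self_le {n a x : ℕ} (ha : a * a < n) (hx : x * x ≤ n) :
    a * x < n := by
  nlinarith

theorem lt_of_mul_add_eq_of_lt_sq {n a c d : ℕ} (h : a * c + d = n) (hd : 0 < d)
    (hc : n < c ^ 2) : a < c :=
  lt_of_mul_lt_mul_right (a := c) (by rw [sq] at hc; omega) (Nat.zero_le c)

theorem mul_self_lt_of_mul_add_eq_of_lt_sq {n a c d : ℕ} (h : a * c + d = n) (hd : 0 < d)
    (hc : n < c ^ 2) : a * a < n :=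
  (Nat.mul_le_mul_left a (lt_of_mul_add_eq_of_lt_sq h hd hc).le).trans_lt (by omega)

namespace IsFareyTriple

variable {n : ℕ} {P : Fin 3 → ℕ × ℕ}

theorem fst_mul_add_eq (hP : IsFareyTriple n P) (i : Fin 3) :
    (P i).1 * ((P (i + 2)).1 + (P (i + 2)).2) + (P i).2 * (P (i + 2)).2 = n := by
  simpa [add_assoc] using hP.2.2 (i + 2)

theorem snd_mul_add_eq (hP : IsFareyTriple n P) (i : Fin 3) :
    (P i).2 * ((P (i + 1)).1 + (P (i + 1)).2) + (P (i + 1)).1 * (P i).1 = n := by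
  linear_combination hP.2.2 i

theorem add_le (hP : IsFareyTriple n P) (i : Fin 3) :
    (P i).1 + (P i).2 ≤ (P (i + 1)).2 + (P (i + 2)).1 := by
  refine add_le_of_mul_add_mul_eq (hP.1 i).2.2 ((hP.fst_mul_add_eq i).trans (hP.2.2 i).symm) ?_
  have := (hP.1 (i + 2)).1
  omega

theorem add_eq (hP : IsFareyTriple n P) (i : Fin 3) :
    (P i).1 + (P i).2 = (P (i + 1)).2 + (P (i + 2)).1 := by
  have h₁ := hP.add_le (i + 1)
  have h₂ := hP.add_le (i + 2)
  simp only [add_assoc, Fin.reduceAdd, add_zero] at h₁ h₂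
  have := hP.add_le i
  omega

theorem exists_min_three_mul_sq_lt (hP : IsFareyTriple n P) :
    ∃ i, (∀ j, (P i).1 + (P i).2 ≤ (P j).1 + (P j).2) ∧ 3 * ((P i).1 + (P i).2) ^ 2 < 4 * n := by
  obtain ⟨i, hmin⟩ := Finite.exists_min fun i ↦ (P i).1 + (P i).2
  have hfst : (P i).1 ≤ (P (i + 1)).1 := by
    have h₁ := hmin (i + 2)
    have h₂ := hP.add_eq (i + 2)
    simp only [add_assoc, Fin.reduceAdd, add_zero] at h₂
    omega
  exact ⟨i, hmin, three_mul_sq_lt_four_mul (hP.1 i).2.1 (hP.2.1.ne (by simp)) (hmin (i + 1))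
    hfst (hP.2.2 i)⟩

theorem fst_lt (hP : IsFareyTriple n P) (hlarge : ∀ i, n < ((P i).1 + (P i).2) ^ 2) (i : Fin 3) :
    (P i).1 < (P (i + 2)).1 + (P (i + 2)).2 :=
  lt_of_mul_add_eq_of_lt_sq (hP.fst_mul_add_eq i) (Nat.mul_pos (hP.1 i).2.1 (hP.1 (i + 2)).2.1)
    (hlarge (i + 2))

theorem snd_lt (hP : IsFareyTriple n P) (hlarge : ∀ i, n < ((P i).1 + (P i).2) ^ 2) (i : Fin 3) :
    (P i).2 < (P (i + 1)).1 + (P (i + 1)).2 :=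
  lt_of_mul_add_eq_of_lt_sq (hP.snd_mul_add_eq i) (Nat.mul_pos (hP.1 (i + 1)).1 (hP.1 i).1)
    (hlarge (i + 1))

theorem fst_mul_self_lt (hP : IsFareyTriple n P) (hlarge : ∀ i, n < ((P i).1 + (P i).2) ^ 2)
    (i : Fin 3) : (P i).1 * (P i).1 < n :=
  mul_self_lt_of_mul_add_eq_of_lt_sq (hP.fst_mul_add_eq i)
    (Nat.mul_pos (hP.1 i).2.1 (hP.1 (i + 2)).2.1) (hlarge (i + 2))

theorem snd_mul_self_lt (hP : IsFareyTriple n P) (hlarge : ∀ i, n < ((P i).1 + (P i).2) ^ 2)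
    (i : Fin 3) : (P i).2 * (P i).2 < n :=
  mul_self_lt_of_mul_add_eq_of_lt_sq (hP.snd_mul_add_eq i)
    (Nat.mul_pos (hP.1 (i + 1)).1 (hP.1 i).1) (hlarge (i + 1))

theorem isSide (hP : IsFareyTriple n P) (hlarge : ∀ i, n < ((P i).1 + (P i).2) ^ 2) (i : Fin 3) :
    IsSide (Nat.sqrt n) (P i).1 (P i).2 :=
  ⟨(hP.1 i).1, (hP.1 i).2.1, (hP.1 i).2.2, Nat.le_sqrt.mpr (hP.fst_mul_self_lt hlarge i).le,
    Nat.le_sqrt.mpr (hP.snd_mul_self_lt hlarge i).le, Nat.sqrt_lt'.mpr (hlarge i)⟩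

theorem eq_or_add_le_of_eq (hP : IsFareyTriple n P) (i : Fin 3) {x y : ℕ}
    (h : (P i).1 * x + (P i).2 * y = n) :
    (x = (P (i + 2)).1 + (P (i + 2)).2 ∧ y = (P (i + 2)).2) ∨
      (P (i + 2)).1 + (P (i + 2)).2 + (P i).2 ≤ x ∨ (P (i + 1)).1 + (P (i + 1)).2 ≤ y := by
  have hsucc := hP.add_eq (i + 1)
  simp only [add_assoc, Fin.reduceAdd, add_zero] at hsucc
  rw [hsucc]
  exact eq_or_add_le_of_mul_add_mul_eq (hP.1 i).2.1 (hP.1 i).2.2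
    (h.trans (hP.fst_mul_add_eq i).symm)

theorem not_dvd_sq_add_mul_add_sq (hP : IsFareyTriple n P)
    (hlarge : ∀ i, n < ((P i).1 + (P i).2) ^ 2) (i : Fin 3) :
    ¬ n ∣ (P i).1 ^ 2 + (P i).1 * (P i).2 + (P i).2 ^ 2 := by
  intro hdvd
  have ha := hP.fst_mul_self_lt hlarge i
  have hb := hP.snd_mul_self_lt hlarge i
  have hab := mul_lt_of_mul_self_lt_of_mul_self_le ha hb.le
  have hpos : 0 < (P i).1 ^ 2 + (P i).1 * (P i).2 + (P i).2 ^ 2 := by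
    have := (hP.1 i).1
    positivity
  have heq : (P i).1 ^ 2 + (P i).1 * (P i).2 + (P i).2 ^ 2 = n := by
    refine (eq_or_eq_two_mul_of_dvd hdvd hpos (by rw [sq, sq]; omega)).resolve_right fun h ↦ ?_
    exact Nat.not_even_iff_odd.mpr (odd_sq_add_mul_add_sq (hP.1 i).2.2) (h ▸ even_two_mul n)
  rcases hP.eq_or_add_le_of_eq i (x := (P i).1 + (P i).2) (y := (P i).2)
    (by linear_combination heq) with ⟨hx, hy⟩ | hx | hy
  · exact hP.2.1.ne (by simp) (Prod.ext (by omega) hy)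
  · have := hP.fst_lt hlarge i
    omega
  · have := hP.snd_lt hlarge i
    omega

theorem not_dvd_mul_add_mul_of_isSide (hP : IsFareyTriple n P)
    (hlarge : ∀ i, n < ((P i).1 + (P i).2) ^ 2) (i : Fin 3) {x y : ℕ}
    (hxy : IsSide (Nat.sqrt n) x y) : ¬ n ∣ (P i).1 * x + (P i).2 * y := by
  obtain ⟨hx, -, -, hxv, hyv, -⟩ := hxy
  intro hdvd
  have hax := mul_lt_of_mul_self_lt_of_mul_self_le (hP.fst_mul_self_lt hlarge i)
    (Nat.le_sqrt.mp hxv)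
  have hby := mul_lt_of_mul_self_lt_of_mul_self_le (hP.snd_mul_self_lt hlarge i)
    (Nat.le_sqrt.mp hyv)
  have hpos : 0 < (P i).1 * x + (P i).2 * y := Nat.add_pos_left (Nat.mul_pos (hP.1 i).1 hx) _
  have heq := (eq_or_eq_two_mul_of_dvd hdvd hpos (by omega)).resolve_right (by omega)
  have hxc := Nat.sqrt_lt'.mpr (hlarge (i + 2))
  have hyc := Nat.sqrt_lt'.mpr (hlarge (i + 1))
  rcases hP.eq_or_add_le_of_eq i heq with ⟨hx, -⟩ | hx | hy <;> omega

theorem isFreeSide (hP : IsFareyTriple n P) (hlarge : ∀ i, n < ((P i).1 + (P i).2) ^ 2)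
    (i : Fin 3) : IsFreeSide n (P i).1 (P i).2 :=
  ⟨hP.isSide hlarge i, hP.not_dvd_sq_add_mul_add_sq hlarge i,
    fun _ _ ↦ hP.not_dvd_mul_add_mul_of_isSide hlarge i⟩

end IsFareyTriple

theorem stmt9_general (n : ℕ) (P : Fin 3 → ℕ × ℕ) (hP : IsFareyTriple n P) :
    (∀ i : Fin 3, (P i).1 + (P i).2 = (P (i + 1)).2 + (P (i + 2)).1) ∧
    (∃ i : Fin 3, (∀ j, (P i).1 + (P i).2 ≤ (P j).1 + (P j).2) ∧
      ((P i).1 + (P i).2 : ℝ) < Real.sqrt (4 * n / 3)) ∧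
    ((∀ i : Fin 3, Real.sqrt n < ((P i).1 + (P i).2 : ℝ)) →
      ∀ i : Fin 3, (max (P i).1 (P i).2 : ℝ) < Real.sqrt n ∧
        IsFreeSide n (P i).1 (P i).2) := by
  refine ⟨hP.add_eq, ?_, fun hsqrt i ↦ ?_⟩
  · obtain ⟨i, hmin, hlt⟩ := hP.exists_min_three_mul_sq_lt
    refine ⟨i, hmin, (Real.lt_sqrt (by positivity)).mpr ?_⟩
    rw [lt_div_iff₀ (by norm_num)]
    exact_mod_cast (mul_comm _ 3).trans_lt hlt
  · have hlarge : ∀ i, n < ((P i).1 + (P i).2) ^ 2 := fun i ↦ by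
      have := (Real.sqrt_lt (by positivity) (by positivity)).mp (hsqrt i)
      exact_mod_cast this
    have hlt : ∀ m : ℕ, m * m < n → (m : ℝ) < Real.sqrt n := fun m hm ↦
      (Real.lt_sqrt (by positivity)).mpr (by exact_mod_cast (sq m).trans_lt hm)
    refine ⟨?_, hP.isFreeSide hlarge i⟩
    exact max_lt (hlt _ (hP.fst_mul_self_lt hlarge i)) (hlt _ (hP.snd_mul_self_lt hlarge i))

/-- **Lemma.** Let `{(aᵢ, bᵢ)}` be an `n`-Farey triple. Then
(i) `aᵢ + bᵢ = b_{i+1} + a_{i+2}` for each `i`;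
(ii) `minᵢ (aᵢ + bᵢ) < √(4n/3)`;
(iii) if moreover `minᵢ (aᵢ + bᵢ) > √n`, then `max(aᵢ, bᵢ) < √n` for all `i` and every
`(aᵢ, bᵢ)` is a free side of `dF_{⌊√n⌋}`. -/
theorem stmt9 (n : ℕ) (hn : 0 < n) (P : Fin 3 → ℕ × ℕ) (hP : IsFareyTriple n P) :
    (∀ i : Fin 3, (P i).1 + (P i).2 = (P (i + 1)).2 + (P (i + 2)).1) ∧
    (∃ i : Fin 3, (∀ j, (P i).1 + (P i).2 ≤ (P j).1 + (P j).2) ∧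
      ((P i).1 + (P i).2 : ℝ) < Real.sqrt (4 * n / 3)) ∧
    ((∀ i : Fin 3, Real.sqrt n < ((P i).1 + (P i).2 : ℝ)) →
      ∀ i : Fin 3, (max (P i).1 (P i).2 : ℝ) < Real.sqrt n ∧
        IsFreeSide n (P i).1 (P i).2) :=
  stmt9_general n P hP
end

section
/- Let n be a positive integer and let (a_0, b_0), (a_1, b_1), (a_2, b_2) be pairs of coprime positive integers such that a_1(a_0 + b_0) + b_1 b_0 = n and (a_2, b_2) = (a_0 + b_0 − b_1, a_1 + b_1 − a_0). Then either all three pairs are equal to (a_0, b_0), or the three pairs are pairwise distinct and form an n-Farey triple. -/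
/-!
Over any commutative ring put `⟪p, q⟫ = q₁ (p₁ + p₂) + q₂ p₂` and, for two pairs `p, q`, let
`r = (p₁ + p₂ - q₂, q₁ + q₂ - p₁)`. Expanding shows `⟪q, r⟫ = ⟪r, p⟫ = ⟪p, q⟫`, so once
`⟪p, q⟫ = n` the three pairs satisfy all three cyclic Farey relations. Moreover `r = p` and
`r = q` each force `q = p`, so the triple is either constant or pairwise distinct. Running this
in `ℤ` and pulling it back along the injective cast `ℕ × ℕ → ℤ × ℤ` gives the theorem.
-/

section FareyPairing

variable {R : Type*}

def fareyPairing [Add R] [Mul R] (p q : R × R) : R :=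
  q.1 * (p.1 + p.2) + q.2 * p.2

def fareyThird [Add R] [Sub R] (p q : R × R) : R × R :=
  (p.1 + p.2 - q.2, q.1 + q.2 - p.1)

theorem Nat.cast_fareyPairing [Semiring R] (p q : ℕ × ℕ) :
    ((fareyPairing p q : ℕ) : R) =
      fareyPairing (Prod.map Nat.cast Nat.cast p) (Prod.map Nat.cast Nat.cast q) := by
  simp only [fareyPairing, Prod.map_fst, Prod.map_snd]
  push_cast
  rfl

section CommRing

variable [CommRing R] (p q : R × R)

theorem fareyPairing_fareyThird_left : fareyPairing q (fareyThird p q) = fareyPairing p q := by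
  simp only [fareyPairing, fareyThird]
  ring

theorem fareyPairing_fareyThird_right : fareyPairing (fareyThird p q) p = fareyPairing p q := by
  simp only [fareyPairing, fareyThird]
  ring

end CommRing

section AddCommGroup

variable [AddCommGroup R] (p q : R × R)

theorem fareyThird_eq_left_iff : fareyThird p q = p ↔ q = p := by
  simp only [fareyThird, Prod.ext_iff]
  grind

@[simp]
theorem fareyThird_self : fareyThird p p = p :=
  (fareyThird_eq_left_iff p p).2 rfl

theorem fareyThird_eq_right_iff : fareyThird p q = q ↔ q = p := by
  simp only [fareyThird, Prod.ext_iff]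
  grind

end AddCommGroup

end FareyPairing

theorem fareyPairing_eq_of_cast_eq_fareyThird {p q r : ℕ × ℕ}
    (h : Prod.map Nat.cast Nat.cast r = fareyThird (R := ℤ) (Prod.map Nat.cast Nat.cast p)
      (Prod.map Nat.cast Nat.cast q)) :
    fareyPairing q r = fareyPairing p q ∧ fareyPairing r p = fareyPairing p q := by
  constructor <;> apply Nat.cast_injective (R := ℤ) <;> simp only [Nat.cast_fareyPairing, h]
  exacts [fareyPairing_fareyThird_left .., fareyPairing_fareyThird_right ..]

theorem injective_triple_iff_ne {α : Type*} {p q r : α} :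
    Function.Injective ![p, q, r] ↔ p ≠ q ∧ p ≠ r ∧ q ≠ r := by
  rw [Matrix.vecCons, Fin.cons_injective_iff, injective_pair_iff_ne, Set.mem_range,
    Fin.exists_fin_two]
  simp only [Matrix.cons_val_zero, Matrix.cons_val_one, Matrix.cons_val_fin_one]
  grind

theorem isFareyTriple_iff {n : ℕ} {p q r : ℕ × ℕ} :
    IsFareyTriple n ![p, q, r] ↔
      (∀ x ∈ [p, q, r], 0 < x.1 ∧ 0 < x.2 ∧ x.1.Coprime x.2) ∧ (p ≠ q ∧ p ≠ r ∧ q ≠ r) ∧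
        (fareyPairing p q = n ∧ fareyPairing q r = n ∧ fareyPairing r p = n) := by
  rw [IsFareyTriple, injective_triple_iff_ne]
  simp [Fin.forall_fin_succ, fareyPairing]

theorem stmt10_general (n : ℕ) (a₀ b₀ a₁ b₁ a₂ b₂ : ℕ)
    (h₀ : 0 < a₀ ∧ 0 < b₀ ∧ Nat.Coprime a₀ b₀)
    (h₁ : 0 < a₁ ∧ 0 < b₁ ∧ Nat.Coprime a₁ b₁)
    (h₂ : 0 < a₂ ∧ 0 < b₂ ∧ Nat.Coprime a₂ b₂)
    (heq : a₁ * (a₀ + b₀) + b₁ * b₀ = n)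
    (ha₂ : (a₂ : ℤ) = (a₀ : ℤ) + b₀ - b₁)
    (hb₂ : (b₂ : ℤ) = (a₁ : ℤ) + b₁ - a₀) :
    ((a₁, b₁) = (a₀, b₀) ∧ (a₂, b₂) = (a₀, b₀)) ∨
      IsFareyTriple n ![(a₀, b₀), (a₁, b₁), (a₂, b₂)] := by
  set ι : ℕ × ℕ → ℤ × ℤ := Prod.map Nat.cast Nat.cast
  have hι : Function.Injective ι := Nat.cast_injective.prodMap Nat.cast_injective
  have hthird : ι (a₂, b₂) = fareyThird (ι (a₀, b₀)) (ι (a₁, b₁)) := Prod.ext ha₂ hb₂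
  by_cases h : (a₁, b₁) = (a₀, b₀)
  · refine Or.inl ⟨h, hι ?_⟩
    rw [hthird, h, fareyThird_self]
  · have hpos : ∀ x ∈ [(a₀, b₀), (a₁, b₁), (a₂, b₂)], 0 < x.1 ∧ 0 < x.2 ∧ x.1.Coprime x.2 := by
      simp only [List.forall_mem_cons]
      exact ⟨h₀, h₁, h₂, List.forall_mem_nil _⟩
    have h₁₀ : ι (a₁, b₁) ≠ ι (a₀, b₀) := hι.ne h
    have h₀₂ : (a₀, b₀) ≠ (a₂, b₂) := fun h₀₂ ↦ h₁₀ <| by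
      rw [← fareyThird_eq_left_iff, ← hthird, h₀₂]
    have h₁₂ : (a₁, b₁) ≠ (a₂, b₂) := fun h₁₂ ↦ h₁₀ <| by
      rw [← fareyThird_eq_right_iff, ← hthird, h₁₂]
    exact Or.inr <| isFareyTriple_iff.mpr
      ⟨hpos, ⟨Ne.symm h, h₀₂, h₁₂⟩, heq, heq ▸ fareyPairing_eq_of_cast_eq_fareyThird hthird⟩

/-- **Lemma.** Let `(a₀, b₀), (a₁, b₁), (a₂, b₂)` be pairs of coprime positive integers with
`a₁ (a₀ + b₀) + b₁ b₀ = n` and `(a₂, b₂) = (a₀ + b₀ − b₁, a₁ + b₁ − a₀)`. Then either all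
three pairs equal `(a₀, b₀)`, or they are pairwise distinct and form an `n`-Farey triple. -/
theorem stmt10 (n : ℕ) (hn : 0 < n) (a₀ b₀ a₁ b₁ a₂ b₂ : ℕ)
    (h₀ : 0 < a₀ ∧ 0 < b₀ ∧ Nat.Coprime a₀ b₀)
    (h₁ : 0 < a₁ ∧ 0 < b₁ ∧ Nat.Coprime a₁ b₁)
    (h₂ : 0 < a₂ ∧ 0 < b₂ ∧ Nat.Coprime a₂ b₂)
    (heq : a₁ * (a₀ + b₀) + b₁ * b₀ = n)
    (ha₂ : (a₂ : ℤ) = (a₀ : ℤ) + b₀ - b₁)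
    (hb₂ : (b₂ : ℤ) = (a₁ : ℤ) + b₁ - a₀) :
    ((a₁, b₁) = (a₀, b₀) ∧ (a₂, b₂) = (a₀, b₀)) ∨
      IsFareyTriple n ![(a₀, b₀), (a₁, b₁), (a₂, b₂)] :=
  stmt10_general n a₀ b₀ a₁ b₁ a₂ b₂ h₀ h₁ h₂ heq ha₂ hb₂
end

section
/- Let n ≥ 2 be an integer with v = ⌊√n⌋, and let (a_0, b_0), (a_1, b_1), (a_2, b_2) be sides of dF_v such that a_1(a_0 + b_0) + b_1 b_0 = n and a_2(a_1 + b_1) + b_2 b_1 = n. Then either all three pairs are equal to (a_0, b_0), or the three pairs are pairwise distinct and form an n-Farey triple. -/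
lemma Function.injective_vec3 {α : Type*} {x y z : α} (hxy : x ≠ y) (hxz : x ≠ z)
    (hyz : y ≠ z) : Function.Injective ![x, y, z] := by
  intro i j hij
  fin_cases i <;> fin_cases j <;> simp_all [eq_comm]

lemma isFareyTriple_of {n a₀ b₀ a₁ b₁ a₂ b₂ : ℕ}
    (hpos₀ : 0 < a₀ ∧ 0 < b₀ ∧ Nat.Coprime a₀ b₀)
    (hpos₁ : 0 < a₁ ∧ 0 < b₁ ∧ Nat.Coprime a₁ b₁)
    (hpos₂ : 0 < a₂ ∧ 0 < b₂ ∧ Nat.Coprime a₂ b₂)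
    (h₀₁ : (a₀, b₀) ≠ (a₁, b₁)) (h₀₂ : (a₀, b₀) ≠ (a₂, b₂)) (h₁₂ : (a₁, b₁) ≠ (a₂, b₂))
    (heq₀ : a₁ * (a₀ + b₀) + b₁ * b₀ = n) (heq₁ : a₂ * (a₁ + b₁) + b₂ * b₁ = n)
    (heq₂ : a₀ * (a₂ + b₂) + b₀ * b₂ = n) :
    IsFareyTriple n ![(a₀, b₀), (a₁, b₁), (a₂, b₂)] := by
  refine ⟨fun i ↦ ?_, Function.injective_vec3 h₀₁ h₀₂ h₁₂, fun i ↦ ?_⟩ <;>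
    fin_cases i <;> simpa

lemma add_dvd_of_farey_steps {a₀ b₀ a₁ b₁ a₂ b₂ : ℕ} (hcop : Nat.Coprime a₁ b₁)
    (h : a₂ * (a₁ + b₁) + b₂ * b₁ = a₁ * (a₀ + b₀) + b₁ * b₀) :
    a₁ + b₁ ∣ b₂ + a₀ := by
  have hid : b₁ * (b₂ + a₀) + a₂ * (a₁ + b₁) = (a₁ + b₁) * (a₀ + b₀) := by
    linear_combination h
  have hdvd : a₁ + b₁ ∣ b₁ * (b₂ + a₀) :=
    (Nat.dvd_add_left (dvd_mul_left _ _)).mp (hid ▸ dvd_mul_right _ _)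
  exact (Nat.coprime_add_self_left.mpr hcop).dvd_of_dvd_mul_left hdvd

lemma sums_eq_of_farey_steps {a₀ b₀ a₁ b₁ a₂ b₂ : ℕ} (hcop : Nat.Coprime a₁ b₁)
    (ha₀ : 0 < a₀) (hlt : b₂ + a₀ < 2 * (a₁ + b₁))
    (h : a₂ * (a₁ + b₁) + b₂ * b₁ = a₁ * (a₀ + b₀) + b₁ * b₀) :
    b₂ + a₀ = a₁ + b₁ ∧ a₂ + b₁ = a₀ + b₀ := by
  have hsum₂ : b₂ + a₀ = a₁ + b₁ :=
    Nat.eq_of_dvd_of_lt_two_mul (by omega) (add_dvd_of_farey_steps hcop h) hlt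
  refine ⟨hsum₂, Nat.eq_of_mul_eq_mul_left (by omega : 0 < a₁ + b₁) ?_⟩
  calc (a₁ + b₁) * (a₂ + b₁) = a₂ * (a₁ + b₁) + (b₂ + a₀) * b₁ := by rw [hsum₂]; ring
    _ = (a₁ + b₁) * (a₀ + b₀) := by linear_combination h

lemma farey_step_eq_of_sums_eq {a₀ b₀ a₁ b₁ a₂ b₂ : ℕ} (hsum₂ : b₂ + a₀ = a₁ + b₁)
    (hsum₁ : a₂ + b₁ = a₀ + b₀) :
    a₀ * (a₂ + b₂) + b₀ * b₂ = a₁ * (a₀ + b₀) + b₁ * b₀ := by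
  zify at hsum₁ hsum₂ ⊢
  linear_combination (a₀ : ℤ) * hsum₁ + ((a₀ : ℤ) + b₀) * hsum₂

theorem stmt11_general (n : ℕ) (a₀ b₀ a₁ b₁ a₂ b₂ : ℕ)
    (h₀ : IsSide (Nat.sqrt n) a₀ b₀)
    (h₁ : IsSide (Nat.sqrt n) a₁ b₁)
    (h₂ : IsSide (Nat.sqrt n) a₂ b₂)
    (heq₀ : a₁ * (a₀ + b₀) + b₁ * b₀ = n)
    (heq₁ : a₂ * (a₁ + b₁) + b₂ * b₁ = n) :
    ((a₁, b₁) = (a₀, b₀) ∧ (a₂, b₂) = (a₀, b₀)) ∨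
      IsFareyTriple n ![(a₀, b₀), (a₁, b₁), (a₂, b₂)] := by
  obtain ⟨ha₀, hb₀, hcop₀, ha₀v, -, -⟩ := h₀
  obtain ⟨ha₁, hb₁, hcop₁, -, -, hv₁⟩ := h₁
  obtain ⟨ha₂, hb₂, hcop₂, -, hb₂v, -⟩ := h₂
  obtain ⟨hsum₂, hsum₁⟩ :=
    sums_eq_of_farey_steps hcop₁ ha₀ (by omega) (heq₁.trans heq₀.symm)
  have heq₂ := (farey_step_eq_of_sums_eq hsum₂ hsum₁).trans heq₀
  by_cases h : (a₁, b₁) = (a₀, b₀)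
  · left
    simp only [Prod.ext_iff] at h ⊢
    omega
  · right
    refine isFareyTriple_of ⟨ha₀, hb₀, hcop₀⟩ ⟨ha₁, hb₁, hcop₁⟩ ⟨ha₂, hb₂, hcop₂⟩
      (Ne.symm h) ?_ ?_ heq₀ heq₁ heq₂ <;>
    · simp only [ne_eq, Prod.ext_iff] at h ⊢
      omega

/-- **Lemma.** Let `n ≥ 2`, `v = ⌊√n⌋`, and let `(a₀, b₀), (a₁, b₁), (a₂, b₂)` be sides of
`dF_v` with `a₁ (a₀ + b₀) + b₁ b₀ = n` and `a₂ (a₁ + b₁) + b₂ b₁ = n`. Then either all three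
pairs equal `(a₀, b₀)`, or they are pairwise distinct and form an `n`-Farey triple. -/
theorem stmt11 (n : ℕ) (hn : 2 ≤ n) (a₀ b₀ a₁ b₁ a₂ b₂ : ℕ)
    (h₀ : IsSide (Nat.sqrt n) a₀ b₀)
    (h₁ : IsSide (Nat.sqrt n) a₁ b₁)
    (h₂ : IsSide (Nat.sqrt n) a₂ b₂)
    (heq₀ : a₁ * (a₀ + b₀) + b₁ * b₀ = n)
    (heq₁ : a₂ * (a₁ + b₁) + b₂ * b₁ = n) :
    ((a₁, b₁) = (a₀, b₀) ∧ (a₂, b₂) = (a₀, b₀)) ∨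
      IsFareyTriple n ![(a₀, b₀), (a₁, b₁), (a₂, b₂)] :=
  stmt11_general n a₀ b₀ a₁ b₁ a₂ b₂ h₀ h₁ h₂ heq₀ heq₁
end

section
/- Let n be a prime or the square of a prime, let v = ⌊√n⌋, and let (a,b) be a free side of dF_v. Then the set S(a,b;n) ∩ ℤ₊² is primitive; that is, every pair of positive integers (x, y) with ax + by = n satisfies gcd(x, y) = 1. (Note that any free side satisfies a + b > √n, and the conclusion holds for any coprime positive integers a, b with a + b > √n.) -/
/-!
Let `d = gcd(x, y)`. Writing `x = d x'`, `y = d y'` gives `d (a + b) ≤ d (a x' + b y') = n`,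
and `a + b > √n` then forces `d² < n`. A divisor of `p` or of `p²` whose square is below it
must be `1`.
-/

theorem Nat.gcd_mul_add_le {x y : ℕ} (hx : 0 < x) (hy : 0 < y) (a b : ℕ) :
    Nat.gcd x y * (a + b) ≤ a * x + b * y := by
  obtain ⟨x', hx'⟩ := Nat.gcd_dvd_left x y
  obtain ⟨y', hy'⟩ := Nat.gcd_dvd_right x y
  have hx'pos : 1 ≤ x' := Nat.pos_of_mul_pos_left (hx'.symm ▸ hx)
  have hy'pos : 1 ≤ y' := Nat.pos_of_mul_pos_left (hy'.symm ▸ hy)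
  calc Nat.gcd x y * (a + b)
      ≤ Nat.gcd x y * (a * x' + b * y') := by gcongr <;> nlinarith
    _ = a * (Nat.gcd x y * x') + b * (Nat.gcd x y * y') := by ring
    _ = a * x + b * y := by rw [← hx', ← hy']

theorem Nat.mul_self_lt_of_mul_le {d m n : ℕ} (hd : 0 < d) (hdm : d * m ≤ n)
    (hmn : n < m * m) : d * d < n := by
  have hsq : d * m * (d * m) ≤ n * n := Nat.mul_le_mul hdm hdm
  nlinarith

theorem Nat.eq_one_of_dvd_prime_pow_of_mul_self_lt {p k d : ℕ} (hp : p.Prime) (hk : k ≤ 2)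
    (hd : d ∣ p ^ k) (hdd : d * d < p ^ k) : d = 1 := by
  obtain ⟨i, hik, rfl⟩ := (Nat.dvd_prime_pow hp).mp hd
  rw [← pow_add, Nat.pow_lt_pow_iff_right hp.one_lt] at hdd
  rw [show i = 0 by omega, pow_zero]

/-- **Lemma.** If `n` is a prime or the square of a prime and `(a, b)` is a free side of
`dF_{⌊√n⌋}`, then the set `S(a, b; n) ∩ ℤ₊²` is primitive: every pair of positive integers
`(x, y)` with `ax + by = n` satisfies `gcd(x, y) = 1`. -/
theorem stmt12 (n : ℕ) (hn : Nat.Prime n ∨ ∃ p : ℕ, Nat.Prime p ∧ n = p ^ 2)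
    (a b : ℕ) (hab : IsFreeSide n a b) :
    ∀ x y : ℕ, 0 < x → 0 < y → a * x + b * y = n → Nat.Coprime x y := by
  intro x y hx hy hxy
  obtain ⟨⟨-, -, -, -, -, hsqrt⟩, -, -⟩ := hab
  have hdvd : Nat.gcd x y ∣ n :=
    hxy ▸ dvd_add ((Nat.gcd_dvd_left x y).mul_left a) ((Nat.gcd_dvd_right x y).mul_left b)
  have hlt : Nat.gcd x y * Nat.gcd x y < n :=
    Nat.mul_self_lt_of_mul_le (Nat.gcd_pos_of_pos_left y hx) (hxy ▸ Nat.gcd_mul_add_le hx hy a b)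
      (sq (a + b) ▸ Nat.sqrt_lt'.mp hsqrt)
  obtain ⟨p, hp, k, hk, rfl⟩ : ∃ p, p.Prime ∧ ∃ k ≤ 2, n = p ^ k := by
    rcases hn with hn | ⟨p, hp, rfl⟩
    · exact ⟨n, hn, 1, by norm_num, (pow_one n).symm⟩
    · exact ⟨p, hp, 2, le_rfl, rfl⟩
  exact Nat.eq_one_of_dvd_prime_pow_of_mul_self_lt hp hk hdvd hlt
end

section
/- Let n ≥ 2 be an integer with v = ⌊√n⌋, and let (a,b) be a free side of dF_v. Suppose that the set S(a,b;n) ∩ ((v−b, v] × ℤ₊ ∪ ℤ₊ × (v−a, v]) is primitive, i.e. every integer solution (x,y) of ax + by = n with either v − b < x ≤ v and y > 0, or x > 0 and v − a < y ≤ v, satisfies gcd(x,y) = 1. Then (a,b) belongs to an n-Farey triple all three of whose pairs are free sides of dF_v. -/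
/-!
The integer solutions of `a x + b y = n` form the line `(x + k b, y - k a)`, `k ∈ ℤ`, and
`v = ⌊√n⌋`. The line misses `(v, ∞)²` because `(a + b)(v + 1) > n`, and freeness together with
primitivity keep it out of the square `[1, v]²`: a solution there would be a side `(x, y)` with
`n ∣ a x + b y`. Hence a single step of the line, from `(x, y)` to `(x + b, y - a)`, passes from
above the square to its right. The pairs `(x, y - x)` and `(x + b - (y - a), y - a)` complete
`(a, b)` to an `n`-Farey triple of sides of `dF_v`; the picture is symmetric under
`(a, b) ↔ (b, a)`.

The new sides are free: modulo `n`, `(a, b)` is a multiple of `(y, -x)`, so `n ∣ a'² + a'b' + b'²`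
or `n ∣ a' s + b' t` for a new side `(a', b')` turns into `n ∣ a² + ab + b²`, excluded by freeness
of `(a, b)`, or into `a t + b (t - s) ∈ {0, n}`. The latter means `a + b ∣ s`, impossible for
`s ≤ v`, or a solution in `(-∞, v]²`, which the line avoids.
-/

section FareyRelation

variable {R : Type*} [CommRing R] {a b a' b' N : R}

theorem IsCoprime.dvd_of_dvd_mul_of_dvd_mul {x y m : R} (h : IsCoprime x y)
    (hx : N ∣ x * m) (hy : N ∣ y * m) : N ∣ m := by
  obtain ⟨u, w, huw⟩ := h
  have := hx.linear_comb hy u w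
  rwa [← mul_assoc, ← mul_assoc, ← add_mul, huw, one_mul] at this

theorem IsCoprime.self_add_left (h : IsCoprime a' b') : IsCoprime (a' + b') a' := by
  simpa [add_comm] using h.symm.add_mul_left_left 1

/- As `(a', a' + b')` solves `a x + b y = N`, the pair `(a, b)` is a multiple of `(a' + b', -a')`
modulo `N`; the identities below make this precise. -/

theorem dvd_sq_add_mul_add_sq_of_farey (hrel : a' * (a + b) + b' * b = N)
    (hcop : IsCoprime a' b') (hQ : N ∣ a' ^ 2 + a' * b' + b' ^ 2) :
    N ∣ a ^ 2 + a * b + b ^ 2 := by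
  refine (hcop.self_add_left.pow (m := 2) (n := 2)).dvd_of_dvd_mul_of_dvd_mul ?_ ?_
  · have e : (a' + b') ^ 2 * (a ^ 2 + a * b + b ^ 2) =
        a ^ 2 * (a' ^ 2 + a' * b' + b' ^ 2) + (a * b' + b * (a' + b')) * N := by
      rw [← hrel]; ring
    exact e ▸ hQ.linear_comb (dvd_refl N) _ _
  · have e : a' ^ 2 * (a ^ 2 + a * b + b ^ 2) =
        b ^ 2 * (a' ^ 2 + a' * b' + b' ^ 2) + (a * a' - b * b') * N := by
      rw [← hrel]; ring
    exact e ▸ hQ.linear_comb (dvd_refl N) _ _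

theorem dvd_mul_add_mul_sub_of_farey {s t : R} (hrel : a' * (a + b) + b' * b = N)
    (hcop : IsCoprime a' b') (hL : N ∣ a' * s + b' * t) : N ∣ a * t + b * (t - s) := by
  refine hcop.self_add_left.dvd_of_dvd_mul_of_dvd_mul ?_ ?_
  · have e : (a' + b') * (a * t + b * (t - s)) = a * (a' * s + b' * t) + (t - s) * N := by
      rw [← hrel]; ring
    exact e ▸ hL.linear_comb (dvd_refl N) _ _
  · have e : a' * (a * t + b * (t - s)) = -b * (a' * s + b' * t) + t * N := by
      rw [← hrel]; ring
    exact e ▸ hL.linear_comb (dvd_refl N) _ _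

end FareyRelation

theorem exists_mul_add_mul_eq_of_isCoprime {A B : ℤ} (hA : 0 < A) (hcop : IsCoprime A B)
    (N c : ℤ) : ∃ X Y, A * X + B * Y = N ∧ Y ∈ Set.Ico c (c + A) := by
  obtain ⟨u, w, huw⟩ := hcop
  have hr := Int.emod_def (w * N - c) A
  have hr0 := Int.emod_nonneg (w * N - c) hA.ne'
  have hrA := Int.emod_lt_of_pos (w * N - c) hA
  exact ⟨u * N + B * ((w * N - c) / A), w * N - A * ((w * N - c) / A),
    by linear_combination N * huw, by linarith, by linarith⟩

theorem add_le_of_mul_add_mul_eq_s13 {A B x y X Y : ℤ} (hA : 0 < A) (hB : 0 < B)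
    (hcop : IsCoprime A B) (h : A * x + B * y = A * X + B * Y) (hY : Y < y) : x + B ≤ X := by
  have hmul : A * (X - x) = B * (y - Y) := by linear_combination -h
  have hpos : 0 < X - x := pos_of_mul_pos_right (hmul ▸ mul_pos hB (sub_pos.2 hY)) hA.le
  have hdvd : B ∣ X - x := hcop.symm.dvd_of_dvd_mul_left ⟨y - Y, hmul⟩
  linarith [Int.le_of_dvd hpos hdvd]

theorem natCast_sqrt_sq_le (n : ℕ) : (n.sqrt : ℤ) ^ 2 ≤ n := by
  exact_mod_cast Nat.sqrt_le' n

theorem lt_natCast_sqrt_add_one_sq (n : ℕ) : (n : ℤ) < ((n.sqrt : ℤ) + 1) ^ 2 := by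
  exact_mod_cast Nat.lt_succ_sqrt' n

section Sides

variable {v a b : ℕ}

theorem IsSide.symm (h : IsSide v a b) : IsSide v b a := by
  obtain ⟨ha, hb, hcop, hav, hbv, hvab⟩ := h
  exact ⟨hb, ha, hcop.symm, hbv, hav, by omega⟩

theorem IsSide.lt_or_lt_or_eq_one (h : IsSide v a b) : a < v ∨ b < v ∨ v = 1 := by
  obtain ⟨-, -, hcop, hav, hbv, -⟩ := h
  by_cases hab : a = v ∧ b = v
  · obtain ⟨rfl, rfl⟩ := hab
    exact Or.inr (Or.inr ((Nat.coprime_self _).mp hcop))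
  · omega

theorem IsSide.lt_add_of_sq_le (h : IsSide v a b) {X Y : ℤ} (hX : 0 < X) (hY : 0 < Y)
    (hle : (v : ℤ) ^ 2 ≤ a * X + b * Y) : (v : ℤ) < X + Y := by
  by_contra! hXY
  rcases h.lt_or_lt_or_eq_one with hlt | hlt | hv <;> obtain ⟨-, -, -, hav, hbv, -⟩ := h
  · zify at hlt hbv
    nlinarith
  · zify at hlt hav
    nlinarith
  · rw [hv] at hXY
    omega

theorem IsSide.mul_lt {n : ℕ} (h : IsSide n.sqrt a b) (hn : 2 ≤ n) : a * b < n := by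
  have hsq := Nat.sqrt_le' n
  rcases h.lt_or_lt_or_eq_one with hlt | hlt | hv <;> obtain ⟨-, -, -, hav, hbv, -⟩ := h
  · nlinarith
  · nlinarith
  · rw [hv] at hav hbv
    nlinarith

end Sides

theorem IsFreeSide.symm {n a b : ℕ} (h : IsFreeSide n a b) : IsFreeSide n b a := by
  obtain ⟨hside, hQ, hL⟩ := h
  refine ⟨hside.symm, by rwa [show b ^ 2 + b * a + a ^ 2 = a ^ 2 + a * b + b ^ 2 by ring], ?_⟩
  intro x y hxy
  rw [add_comm]
  exact hL y x hxy.symm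

/-- The paper's hypothesis that `S(a, b; n) ∩ ((v - b, v] × ℤ₊ ∪ ℤ₊ × (v - a, v])` is primitive,
where `v = ⌊√n⌋`. -/
def PrimitiveStrips (n a b : ℕ) : Prop :=
  ∀ x y : ℤ, (a : ℤ) * x + (b : ℤ) * y = n →
    (((Nat.sqrt n : ℤ) - b < x ∧ x ≤ (Nat.sqrt n : ℤ) ∧ 0 < y) ∨
      (0 < x ∧ (Nat.sqrt n : ℤ) - a < y ∧ y ≤ (Nat.sqrt n : ℤ))) →
    Int.gcd x y = 1

theorem PrimitiveStrips.symm {n a b : ℕ} (h : PrimitiveStrips n a b) :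
    PrimitiveStrips n b a := by
  intro x y hxy hmem
  rw [Int.gcd_comm]
  exact h y x (by linarith) (by tauto)

section Solutions

variable {n a b : ℕ} {X Y : ℤ}

theorem IsSide.le_sqrt_of_sqrt_lt (h : IsSide n.sqrt a b) (hsol : a * X + b * Y = n)
    (hY : (n.sqrt : ℤ) < Y) : X ≤ n.sqrt := by
  obtain ⟨-, -, -, -, -, hvab⟩ := h
  zify at hvab
  have := lt_natCast_sqrt_add_one_sq n
  by_contra! hX
  nlinarith

theorem IsFreeSide.sqrt_lt_snd_of_fst_le (hab : IsFreeSide n a b)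
    (hprim : PrimitiveStrips n a b) (hsol : a * X + b * Y = n) (hX : 0 < X) (hY : 0 < Y)
    (hXv : X ≤ n.sqrt) : (n.sqrt : ℤ) < Y := by
  have hsq := natCast_sqrt_sq_le n
  obtain ⟨ha, hb, -, hav, hbv, -⟩ := hab.1
  zify at ha hb hav hbv
  by_contra! hYv
  by_cases hstrip : (n.sqrt : ℤ) - b < X ∨ (n.sqrt : ℤ) - a < Y
  · have hgcd : Int.gcd X Y = 1 := hprim X Y hsol (by omega)
    have hsum := hab.1.lt_add_of_sq_le hX hY (hsol ▸ hsq)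
    lift X to ℕ using hX.le
    lift Y to ℕ using hY.le
    refine hab.2.2 X Y ⟨by omega, by omega, ?_, by omega, by omega, by omega⟩ ⟨1, ?_⟩
    · rwa [Int.gcd_natCast_natCast] at hgcd
    · rw [mul_one]; exact_mod_cast hsol
  -- outside both strips, `n = a X + b Y ≤ a (v - b) + b (v - a) < v²`
  · push Not at hstrip
    nlinarith [mul_nonneg (sub_nonneg.mpr hav) (sub_nonneg.mpr hbv)]

theorem IsFreeSide.sqrt_lt_fst_of_snd_le (hab : IsFreeSide n a b)
    (hprim : PrimitiveStrips n a b) (hn : 2 ≤ n) (hsol : a * X + b * Y = n) (hY : 0 < Y)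
    (hYv : Y ≤ n.sqrt) : (n.sqrt : ℤ) < X := by
  by_contra! hXv
  rcases lt_or_ge 0 X with hX | hX
  · exact hYv.not_gt (hab.sqrt_lt_snd_of_fst_le hprim hsol hX hY hXv)
  -- for `X ≤ 0` the neighbouring solution `(X + b, Y - a)` lies in the square `[1, v]²`
  have hsq := natCast_sqrt_sq_le n
  have hab_lt : (a : ℤ) * b < n := by exact_mod_cast hab.1.mul_lt hn
  obtain ⟨ha, hb, -, -, hbv, -⟩ := hab.1
  zify at ha hb hbv
  have hY' : 0 < Y - a := by nlinarith
  have hX' : 0 < X + b := by nlinarith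
  have := hab.sqrt_lt_snd_of_fst_le hprim (by linear_combination hsol) hX' hY' (by linarith)
  linarith

end Solutions

/-- `(x, y)` and `(x + b, y - a)` are consecutive solutions of `a x + b y = n` straddling the
square `[1, v]²`, `v = ⌊√n⌋`: the first lies above it, the second to its right. -/
structure IsCrossing (n a b : ℕ) (x y : ℤ) : Prop where
  sol : (a : ℤ) * x + b * y = n
  pos : 0 < x
  le_sqrt : x ≤ n.sqrt
  sqrt_lt : (n.sqrt : ℤ) < y
  sqrt_lt_add : (n.sqrt : ℤ) < x + b
  sub_pos : 0 < y - a
  sub_le_sqrt : y - a ≤ n.sqrt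

section Crossing

variable {n a b : ℕ} {x y : ℤ}

theorem IsCrossing.symm (hc : IsCrossing n a b x y) : IsCrossing n b a (y - a) (x + b) where
  sol := by linear_combination hc.sol
  pos := hc.sub_pos
  le_sqrt := hc.sub_le_sqrt
  sqrt_lt := hc.sqrt_lt_add
  sqrt_lt_add := by linarith [hc.sqrt_lt]
  sub_pos := by linarith [hc.pos]
  sub_le_sqrt := by linarith [hc.le_sqrt]

theorem exists_isCrossing (hn : 2 ≤ n) (hab : IsFreeSide n a b)
    (hprim : PrimitiveStrips n a b) : ∃ x y, IsCrossing n a b x y := by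
  obtain ⟨ha, -, hcop, hav, hbv, -⟩ := hab.1
  obtain ⟨x, y, hsol, hy, hya⟩ := exists_mul_add_mul_eq_of_isCoprime (by exact_mod_cast ha)
    (Nat.isCoprime_iff_coprime.mpr hcop) n (n.sqrt + 1)
  have hxv := hab.1.le_sqrt_of_sqrt_lt hsol (by omega)
  have hxb := hab.sqrt_lt_fst_of_snd_le hprim hn (X := x + b) (Y := y - a)
    (by linear_combination hsol) (by omega) (by omega)
  exact ⟨x, y, hsol, by omega, hxv, by omega, hxb, by omega, by omega⟩

theorem IsCrossing.sqrt_lt_of_mul_add_mul_eq (hc : IsCrossing n a b x y)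
    (hab : IsSide n.sqrt a b) {X Y : ℤ} (hsol : a * X + b * Y = n) (hY : Y ≤ n.sqrt) :
    (n.sqrt : ℤ) < X := by
  obtain ⟨ha, hb, hcop, -, -, -⟩ := hab
  have := add_le_of_mul_add_mul_eq_s13 (by exact_mod_cast ha) (by exact_mod_cast hb)
    (Nat.isCoprime_iff_coprime.mpr hcop) (hc.sol.trans hsol.symm) (by linarith [hc.sqrt_lt])
  linarith [hc.sqrt_lt_add]

end Crossing

theorem IsFreeSide.of_farey {n a b a' b' : ℕ} (hab : IsFreeSide n a b)
    (hside : IsSide n.sqrt a' b') (hrel : a' * (a + b) + b' * b = n)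
    (hgap : ∀ X Y : ℤ, a * X + b * Y = n → Y ≤ n.sqrt → (n.sqrt : ℤ) < X) :
    IsFreeSide n a' b' := by
  have hcop : IsCoprime (a' : ℤ) b' := Nat.isCoprime_iff_coprime.mpr hside.2.2.1
  have hrelZ : (a' : ℤ) * (a + b) + b' * b = n := by exact_mod_cast hrel
  refine ⟨hside, fun hQ => hab.2.1 ?_, fun s t hst hL => ?_⟩
  · exact_mod_cast dvd_sq_add_mul_add_sq_of_farey hrelZ hcop (by exact_mod_cast hQ)
  obtain ⟨c, hc⟩ := dvd_mul_add_mul_sub_of_farey (s := (s : ℤ)) (t := t) hrelZ hcop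
    (by exact_mod_cast hL)
  obtain ⟨ha, hb, hcopab, hav, hbv, hvab⟩ := hab.1
  obtain ⟨hs, ht, -, hsv, htv, -⟩ := hst
  have hsq := natCast_sqrt_sq_le n
  zify at ha hb hav hbv hs ht hsv htv
  -- `-n < a t + b (t - s) < 2 n`
  have hc0 : 0 ≤ c := by nlinarith
  have hc1 : c ≤ 1 := by nlinarith
  obtain rfl | rfl : c = 0 ∨ c = 1 := by omega
  · have hst : s * b = (a + b) * t := by
      have : (s : ℤ) * b = (a + b) * t := by linear_combination -hc
      exact_mod_cast this
    have hdvd : a + b ∣ s :=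
      (Nat.coprime_add_self_left.mpr hcopab).dvd_of_dvd_mul_right ⟨t, hst⟩
    have := Nat.le_of_dvd (by exact_mod_cast hs) hdvd
    omega
  · have := hgap t (t - s) (by linear_combination hc) (by linarith)
    linarith

theorem IsCrossing.isFreeSide {n a b : ℕ} {x y : ℤ} (hc : IsCrossing n a b x y)
    (hab : IsFreeSide n a b) (hprim : PrimitiveStrips n a b) {a' b' : ℕ}
    (ha' : (a' : ℤ) = x) (hb' : (b' : ℤ) = y - x) : IsFreeSide n a' b' := by
  have hgcd : Int.gcd x y = 1 := hprim x y hc.sol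
    (Or.inl ⟨by linarith [hc.sqrt_lt_add], hc.le_sqrt, by linarith [hc.sqrt_lt]⟩)
  have hcop : Nat.Coprime a' b' := by
    rw [← Nat.isCoprime_iff_coprime, ha', hb', sub_eq_add_neg, ← mul_neg_one]
    exact (Int.isCoprime_iff_gcd_eq_one.mpr hgcd).add_mul_left_right _
  have hb'v : y - x ≤ n.sqrt := by
    obtain ⟨-, -, -, -, -, hvab⟩ := hab.1
    zify at hvab
    have := lt_natCast_sqrt_add_one_sq n
    by_contra! h
    nlinarith [hc.sol, hc.pos, hc.sqrt_lt_add]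
  have := hc.pos
  have := hc.le_sqrt
  have := hc.sqrt_lt
  have hside : IsSide n.sqrt a' b' := ⟨by omega, by omega, hcop, by omega, by omega, by omega⟩
  have hrel : a' * (a + b) + b' * b = n := by
    have : (a' : ℤ) * (a + b) + b' * b = n := by rw [ha', hb']; linear_combination hc.sol
    exact_mod_cast this
  exact hab.of_farey hside hrel fun X Y h hY => hc.sqrt_lt_of_mul_add_mul_eq hab.1 h hY

theorem Fin.injective_of_add_one_ne {α : Type*} {P : Fin 3 → α} (h : ∀ i, P (i + 1) ≠ P i) :
    Function.Injective P := by
  have := h 0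
  have := h 1
  have := h 2
  intro i j hij
  fin_cases i <;> fin_cases j <;> simp_all

theorem isFareyTriple_of_isFreeSide {n : ℕ} {P : Fin 3 → ℕ × ℕ}
    (hfree : ∀ i, IsFreeSide n (P i).1 (P i).2)
    (hrel : ∀ i : Fin 3, (P (i + 1)).1 * ((P i).1 + (P i).2) + (P (i + 1)).2 * (P i).2 = n) :
    IsFareyTriple n P := by
  refine ⟨fun i => ⟨(hfree i).1.1, (hfree i).1.2.1, (hfree i).1.2.2.1⟩,
    Fin.injective_of_add_one_ne fun i heq => (hfree i).2.1 ?_, hrel⟩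
  rw [← hrel i, heq]
  exact dvd_of_eq (by ring)

/-- **Lemma.** Let `n ≥ 2`, `v = ⌊√n⌋`, and let `(a, b)` be a free side of `dF_v`. If the set
`S(a, b; n) ∩ ((v − b, v] × ℤ₊ ∪ ℤ₊ × (v − a, v])` is primitive, i.e. every integer solution
`(x, y)` of `ax + by = n` with `v − b < x ≤ v, y > 0` or with `x > 0, v − a < y ≤ v` satisfies
`gcd(x, y) = 1`, then `(a, b)` belongs to an `n`-Farey triple consisting of free sides of
`dF_v`. -/
theorem stmt13 (n : ℕ) (hn : 2 ≤ n) (a b : ℕ) (hab : IsFreeSide n a b)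
    (hprim : ∀ x y : ℤ, (a : ℤ) * x + (b : ℤ) * y = n →
      (((Nat.sqrt n : ℤ) - b < x ∧ x ≤ (Nat.sqrt n : ℤ) ∧ 0 < y) ∨
        (0 < x ∧ (Nat.sqrt n : ℤ) - a < y ∧ y ≤ (Nat.sqrt n : ℤ))) →
      Int.gcd x y = 1) :
    ∃ P : Fin 3 → ℕ × ℕ, IsFareyTriple n P ∧
      (∀ i : Fin 3, IsFreeSide n (P i).1 (P i).2) ∧ ∃ i : Fin 3, P i = (a, b) := by
  obtain ⟨x, y, hc⟩ := exists_isCrossing hn hab hprim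
  obtain ⟨a₁, ha₁⟩ := Int.eq_ofNat_of_zero_le hc.pos.le
  obtain ⟨b₁, hb₁⟩ := Int.eq_ofNat_of_zero_le (a := y - x) (by linarith [hc.le_sqrt, hc.sqrt_lt])
  obtain ⟨b₂, hb₂⟩ := Int.eq_ofNat_of_zero_le hc.sub_pos.le
  obtain ⟨a₂, ha₂⟩ := Int.eq_ofNat_of_zero_le (a := x + b - (y - a))
    (by linarith [hc.sqrt_lt_add, hc.sub_le_sqrt])
  have hfree₁ := hc.isFreeSide hab hprim ha₁.symm hb₁.symm
  have hfree₂ :=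
    (hc.symm.isFreeSide hab.symm (PrimitiveStrips.symm hprim) hb₂.symm ha₂.symm).symm
  let P : Fin 3 → ℕ × ℕ := ![(a, b), (a₁, b₁), (a₂, b₂)]
  have hfree : ∀ i, IsFreeSide n (P i).1 (P i).2 := by
    intro i
    fin_cases i <;> assumption
  refine ⟨P, isFareyTriple_of_isFreeSide hfree fun i => ?_, hfree, 0, rfl⟩
  fin_cases i <;> simp only [P, Fin.isValue, Fin.reduceFinMk, Fin.reduceAdd, Matrix.cons_val] <;>
    zify <;> simp only [← ha₁, ← hb₁, ← ha₂, ← hb₂] <;> linear_combination hc.sol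
end

section
/- Let g = [[a, b], [c, d]] be an integer matrix with ad − bc = 1 and c > 0. Suppose there exist rational numbers x, y with 0 ≤ x < y ≤ 1 such that cx + d ≠ 0, cy + d ≠ 0, and 0 ≤ (ay + b)/(cy + d) < (ax + b)/(cx + d) ≤ 1. Then |a + d| ≤ c − 2 and √(a² + b² + c² + d²) < 2c − 1. -/
/-!
By the determinant identity `g x - g y = (ad - bc)(x - y) / ((cx + d)(cy + d))`, a Möbius map
with `c > 0` that reverses the order of `x < y` must have a pole between them: `cx + d < 0 < cy + d`.
Clearing these denominators in `0 ≤ g y < g x ≤ 1` and using `0 ≤ x < y ≤ 1` pins the entries to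
`0 < a < c`, `-a ≤ b < 0` and `-c < d < 0`. Over `ℤ` these strict bounds gain a unit, which gives
`|a + d| ≤ c - 2` and `a² + b² + c² + d² ≤ 4c² - 6c + 3 < (2c - 1)²`.
-/

section Mobius

variable {K : Type*} [Field K] [LinearOrder K] [IsStrictOrderedRing K] {a b c d x y : K}

omit [LinearOrder K] [IsStrictOrderedRing K] in
theorem mobius_sub_mobius (hdx : c * x + d ≠ 0) (hdy : c * y + d ≠ 0) :
    (a * x + b) / (c * x + d) - (a * y + b) / (c * y + d) =
      (a * d - b * c) * (x - y) / ((c * x + d) * (c * y + d)) := by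
  rw [div_sub_div _ _ hdx hdy]
  ring

theorem mobius_denom_neg_pos_of_lt (hdet : 0 < a * d - b * c) (hc : 0 < c) (hxy : x < y)
    (hdx : c * x + d ≠ 0) (hdy : c * y + d ≠ 0)
    (hlt : (a * y + b) / (c * y + d) < (a * x + b) / (c * x + d)) :
    c * x + d < 0 ∧ 0 < c * y + d := by
  have hpos : 0 < (a * d - b * c) * (x - y) / ((c * x + d) * (c * y + d)) := by
    rw [← mobius_sub_mobius hdx hdy]
    exact sub_pos.mpr hlt
  have hnum : (a * d - b * c) * (x - y) < 0 := mul_neg_of_pos_of_neg hdet (sub_neg.mpr hxy)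
  have hdenom : (c * x + d) * (c * y + d) < 0 := by
    rcases div_pos_iff.mp hpos with ⟨hnum', _⟩ | ⟨_, hdenom⟩
    · exact absurd hnum' hnum.not_gt
    · exact hdenom
  have hmono : c * x + d < c * y + d := by gcongr
  rcases mul_neg_iff.mp hdenom with ⟨hX, hY⟩ | h
  · exact absurd (hY.trans hX) hmono.not_gt
  · exact h

theorem mobius_entry_bounds (hdet : 0 < a * d - b * c) (hc : 0 < c)
    (hx : 0 ≤ x) (hxy : x < y) (hy : y ≤ 1) (hdx : c * x + d ≠ 0) (hdy : c * y + d ≠ 0)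
    (h0 : 0 ≤ (a * y + b) / (c * y + d))
    (h1 : (a * y + b) / (c * y + d) < (a * x + b) / (c * x + d))
    (h2 : (a * x + b) / (c * x + d) ≤ 1) :
    0 < a ∧ a < c ∧ b < 0 ∧ 0 ≤ a + b ∧ d < 0 ∧ 0 < c + d := by
  obtain ⟨hX, hY⟩ := mobius_denom_neg_pos_of_lt hdet hc hxy hdx hdy h1
  have hV : 0 ≤ a * y + b := by
    rcases div_nonneg_iff.mp h0 with ⟨hV, _⟩ | ⟨_, hY'⟩
    · exact hV
    · exact absurd hY' hY.not_ge
  have hU : a * x + b < 0 := by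
    rcases div_pos_iff.mp (h0.trans_lt h1) with ⟨_, hX'⟩ | ⟨hU, _⟩
    · exact absurd hX' hX.not_gt
    · exact hU
  have hXU : c * x + d ≤ a * x + b := (div_le_one_of_neg hX).mp h2
  have hVY : a * y + b < c * y + d := (div_lt_one hY).mp (h1.trans_le h2)
  have ha : 0 < a := by nlinarith
  have hac : a < c := by nlinarith
  refine ⟨ha, hac, by nlinarith, by nlinarith, by nlinarith, by nlinarith⟩

end Mobius

theorem abs_add_le_sub_two {a c d : ℤ} (ha : 0 < a) (hac : a < c) (hd : d < 0)
    (hcd : 0 < c + d) : |a + d| ≤ c - 2 := by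
  rw [abs_le]
  omega

theorem sq_add_sq_add_sq_add_sq_lt {a b c d : ℤ} (ha : 0 < a) (hac : a < c) (hb : b < 0)
    (hab : 0 ≤ a + b) (hd : d < 0) (hcd : 0 < c + d) :
    a ^ 2 + b ^ 2 + c ^ 2 + d ^ 2 < (2 * c - 1) ^ 2 := by
  have hb2 : b ^ 2 ≤ a ^ 2 := sq_le_sq' (by omega) (by omega)
  have ha2 : a ^ 2 ≤ (c - 1) ^ 2 := sq_le_sq' (by omega) (by omega)
  have hd2 : d ^ 2 ≤ (c - 1) ^ 2 := sq_le_sq' (by omega) (by omega)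
  nlinarith

/-- **Lemma.** Let `g = [[a, b], [c, d]]` be an integer matrix with `ad − bc = 1` and `c > 0`.
If there exist rationals `0 ≤ x < y ≤ 1` with `cx + d ≠ 0`, `cy + d ≠ 0` and
`0 ≤ g(y) < g(x) ≤ 1` (Möbius action), then `|tr g| = |a + d| ≤ c − 2` and
`‖g‖_F = √(a² + b² + c² + d²) < 2c − 1`. -/
theorem stmt14 (a b c d : ℤ) (hdet : a * d - b * c = 1) (hc : 0 < c)
    (x y : ℚ) (hx : 0 ≤ x) (hxy : x < y) (hy : y ≤ 1)
    (hdx : (c : ℚ) * x + d ≠ 0) (hdy : (c : ℚ) * y + d ≠ 0)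
    (h0 : 0 ≤ ((a : ℚ) * y + b) / ((c : ℚ) * y + d))
    (h1 : ((a : ℚ) * y + b) / ((c : ℚ) * y + d) < ((a : ℚ) * x + b) / ((c : ℚ) * x + d))
    (h2 : ((a : ℚ) * x + b) / ((c : ℚ) * x + d) ≤ 1) :
    |a + d| ≤ c - 2 ∧
      Real.sqrt ((a : ℝ) ^ 2 + (b : ℝ) ^ 2 + (c : ℝ) ^ 2 + (d : ℝ) ^ 2) < 2 * (c : ℝ) - 1 := by
  have hdetQ : (0 : ℚ) < a * d - b * c := by exact_mod_cast (show (0 : ℤ) < a * d - b * c by omega)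
  obtain ⟨ha, hac, hb, hab, hd, hcd⟩ :=
    mobius_entry_bounds hdetQ (by exact_mod_cast hc) hx hxy hy hdx hdy h0 h1 h2
  norm_cast at ha hac hb hab hd hcd
  refine ⟨abs_add_le_sub_two ha hac hd hcd, ?_⟩
  have h2c : (0 : ℝ) < 2 * c - 1 := by
    have : (1 : ℝ) ≤ c := by exact_mod_cast hc
    linarith
  rw [Real.sqrt_lt' h2c]
  exact_mod_cast sq_add_sq_add_sq_add_sq_lt ha hac hb hab hd hcd
end

section
/- Let p ≥ 37 be a prime which is either of the form p = s² + st + t² − 2s − 2t for some positive integers s, t with 3 ≤ s < t < s + 1 + 2√(s+1), or of the form p = 3s² − s − 1 for some positive integer s. Then there exist positive integers S, T, A, B such that p = SA + TB, S + T > A, A = ⌊√(4p/3)⌋, A > T, T ≥ B, B ≥ A − S, and A − S ≥ 1; in particular, p is a cashew integer. -/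
/-!
Both families are of the form `p = S(S + B) + (B + 2)B`; take `T = B + 2` and `A = S + B`.
Every inequality of the system is then immediate once `S ≥ 3` and `B ≥ 1`, and of the bounds
`3A² ≤ 4p < 3(A + 1)²` characterizing `A = ⌊√(4p/3)⌋` the first always holds
(`4p - 3A² = (S - B)² + 8B`) while the second reads `(S - B)² + 2B < 6S + 3`.
The first family is `S = t`, `B = s - 2`, where this is exactly `(t - s - 1)² < 4(s + 1)`,
i.e. `t < s + 1 + 2√(s + 1)`; the second is `S = s`, `B = s - 1`.
-/

lemma Real.nat_floor_sqrt_eq {x : ℝ} {A : ℕ} (h₁ : (A : ℝ) ^ 2 ≤ x) (h₂ : x < ((A : ℝ) + 1) ^ 2) :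
    ⌊√x⌋₊ = A := by
  rw [Nat.floor_eq_iff (Real.sqrt_nonneg x)]
  exact ⟨Real.le_sqrt_of_sq_le h₁, (Real.sqrt_lt' (by positivity)).2 h₂⟩

lemma nat_floor_sqrt_four_mul_div_three_eq {n A : ℕ} (h₁ : 3 * A ^ 2 ≤ 4 * n)
    (h₂ : 4 * n < 3 * (A + 1) ^ 2) : ⌊√(4 * n / 3 : ℝ)⌋₊ = A := by
  have h₁' : (3 * A ^ 2 : ℝ) ≤ 4 * n := by exact_mod_cast h₁
  have h₂' : (4 * n : ℝ) < 3 * (A + 1) ^ 2 := by exact_mod_cast h₂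
  apply Real.nat_floor_sqrt_eq
  · rw [le_div_iff₀ three_pos]; linarith
  · rw [div_lt_iff₀ three_pos]; linarith

lemma Real.sq_lt_four_mul_of_lt_two_mul_sqrt {x y : ℝ} (hx : 0 ≤ x) (h : x < 2 * √y) :
    x ^ 2 < 4 * y := by
  have hy : 0 ≤ y := by
    by_contra hy
    rw [Real.sqrt_eq_zero_of_nonpos (by linarith)] at h
    linarith
  have : √(4 * y) = 2 * √y := by
    rw [Real.sqrt_mul (by norm_num), show (4 : ℝ) = 2 ^ 2 by norm_num, Real.sqrt_sq two_pos.le]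
  rwa [← this, Real.lt_sqrt hx] at h

lemma exists_cashew_solution {p : ℕ} (S B : ℕ) (hB : 1 ≤ B) (hS : 3 ≤ S)
    (hSB : S ^ 2 + B ^ 2 + 2 * B < 2 * S * B + 6 * S + 3) (hp : p = S * (S + B) + (B + 2) * B) :
    ∃ S T A B : ℕ, 0 < S ∧ 0 < T ∧ 0 < A ∧ 0 < B ∧
      p = S * A + T * B ∧ A < S + T ∧ A = ⌊Real.sqrt (4 * p / 3)⌋₊ ∧
      T < A ∧ B ≤ T ∧ (A : ℤ) - S ≤ B ∧ 1 ≤ (A : ℤ) - S := by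
  have hfloor : ⌊√(4 * p / 3 : ℝ)⌋₊ = S + B := by
    apply nat_floor_sqrt_four_mul_div_three_eq
    · zify at hp ⊢; nlinarith [sq_nonneg ((S : ℤ) - B)]
    · subst hp; nlinarith
  refine ⟨S, B + 2, S + B, B, ?_, ?_, ?_, ?_, hp, ?_, hfloor.symm, ?_, ?_, ?_, ?_⟩ <;> omega

theorem stmt16_general (p : ℕ) (hp' : 37 ≤ p)
    (hform : (∃ s t : ℕ, 0 < s ∧ 0 < t ∧ 3 ≤ s ∧ s < t ∧
        ((t : ℝ) < (s : ℝ) + 1 + 2 * Real.sqrt ((s : ℝ) + 1)) ∧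
        (p : ℤ) = (s : ℤ) ^ 2 + s * t + t ^ 2 - 2 * s - 2 * t) ∨
      (∃ s : ℕ, 0 < s ∧ (p : ℤ) = 3 * (s : ℤ) ^ 2 - s - 1)) :
    ∃ S T A B : ℕ, 0 < S ∧ 0 < T ∧ 0 < A ∧ 0 < B ∧
      p = S * A + T * B ∧ A < S + T ∧ A = ⌊Real.sqrt (4 * p / 3)⌋₊ ∧
      T < A ∧ B ≤ T ∧ (A : ℤ) - S ≤ B ∧ 1 ≤ (A : ℤ) - S := by
  obtain ⟨S, B, hB, hS, hSB, hp⟩ : ∃ S B : ℕ, 1 ≤ B ∧ 3 ≤ S ∧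
      S ^ 2 + B ^ 2 + 2 * B < 2 * S * B + 6 * S + 3 ∧ p = S * (S + B) + (B + 2) * B := by
    rcases hform with ⟨s, t, -, -, hs, hst, ht, hp⟩ | ⟨s, -, hp⟩
    · have hgap : ((t : ℝ) - s - 1) ^ 2 < 4 * ((s : ℝ) + 1) :=
        Real.sq_lt_four_mul_of_lt_two_mul_sqrt
          (by linarith [show (s : ℝ) + 1 ≤ t by exact_mod_cast hst]) (by linarith)
      have hgap' : ((t : ℤ) - s - 1) ^ 2 < 4 * ((s : ℤ) + 1) := by exact_mod_cast hgap
      refine ⟨t, s - 2, by omega, by omega, ?_, ?_⟩ <;> zify [show 2 ≤ s by omega]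
      · nlinarith
      · linear_combination hp
    · have hs : 3 ≤ s := by nlinarith
      refine ⟨s, s - 1, by omega, hs, ?_, ?_⟩ <;> zify [show 1 ≤ s by omega]
      · nlinarith
      · linear_combination hp
  exact exists_cashew_solution S B hB hS hSB hp

/-- **Corollary.** Let `p ≥ 37` be a prime which is either of the form
`p = s² + st + t² − 2s − 2t` with `3 ≤ s < t < s + 1 + 2√(s+1)`, or of the form
`p = 3s² − s − 1` with `s` a positive integer. Then there exist positive integers
`S, T, A, B` with `p = SA + TB` and `S + T > A = ⌊√(4p/3)⌋ > T ≥ B ≥ A − S ≥ 1`;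
in particular `p` is a cashew integer, so `m(Γ₀(p)) = ⌊√(4p/3)⌋`. -/
theorem stmt16 (p : ℕ) (hp : Nat.Prime p) (hp' : 37 ≤ p)
    (hform : (∃ s t : ℕ, 0 < s ∧ 0 < t ∧ 3 ≤ s ∧ s < t ∧
        ((t : ℝ) < (s : ℝ) + 1 + 2 * Real.sqrt ((s : ℝ) + 1)) ∧
        (p : ℤ) = (s : ℤ) ^ 2 + s * t + t ^ 2 - 2 * s - 2 * t) ∨
      (∃ s : ℕ, 0 < s ∧ (p : ℤ) = 3 * (s : ℤ) ^ 2 - s - 1)) :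
    ∃ S T A B : ℕ, 0 < S ∧ 0 < T ∧ 0 < A ∧ 0 < B ∧
      p = S * A + T * B ∧ A < S + T ∧ A = ⌊Real.sqrt (4 * p / 3)⌋₊ ∧
      T < A ∧ B ≤ T ∧ (A : ℤ) - S ≤ B ∧ 1 ≤ (A : ℤ) - S :=
  stmt16_general p hp' hform
end
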